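/- arXiv:2006.14101 — 9 statements merged into one kernel-verified Lean document; each statement's English description precedes it below -/
import Mathlib

section
/- Let B be a real Banach space with dual space B*, let ν₁, …, ν_m ∈ B* be linearly independent, and let y ∈ ℝ^m. Then f̂ ∈ B is a solution of the minimum norm interpolation problem with data y if and only if f̂ ∈ M_y and there exist c₁, …, c_m ∈ ℝ such that Σ_{j=1}^m c_j ν_j ∈ ∂‖·‖_B(f̂). -/
/-!
Let `N` be the common kernel of the `ν j`. If `f̂` has minimal norm on `f̂ + N`, its class in
`B ⧸ N` has norm `‖f̂‖`, so Hahn–Banach gives a functional of norm at most one on `B ⧸ N` attaining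
`‖f̂‖` there. Pulled back to `B` it vanishes on `N`, hence is a combination of the `ν j`, and a
functional of norm at most one attaining `‖f̂‖` at `f̂` is a subgradient of the norm at `f̂`.
Conversely, a combination of the `ν j` is constant on the set of interpolants, so the
subgradient inequality there reads `0 ≤ ‖f‖ - ‖f̂‖`.
-/

section SpanOfKernels

variable {𝕜 E ι : Type*} [Field 𝕜] [TopologicalSpace 𝕜] [IsTopologicalRing 𝕜]
  [AddCommGroup E] [TopologicalSpace E] [Module 𝕜 E] [Fintype ι]

theorem ContinuousLinearMap.exists_eq_sum_smul_of_forall_apply_eq_zero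
    (ν : ι → E →L[𝕜] 𝕜) (φ : E →L[𝕜] 𝕜) (h : ∀ z, (∀ j, ν j z = 0) → φ z = 0) :
    ∃ c : ι → 𝕜, φ = ∑ j, c j • ν j := by
  have hker : ⨅ j, LinearMap.ker (ν j : E →ₗ[𝕜] 𝕜) ≤ LinearMap.ker (φ : E →ₗ[𝕜] 𝕜) :=
    fun z hz ↦ h z fun j ↦ Submodule.mem_iInf _ |>.1 hz j
  obtain ⟨c, hc⟩ :=
    (Submodule.mem_span_range_iff_exists_fun 𝕜).1 (mem_span_of_iInf_ker_le_ker hker)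
  refine ⟨c, ContinuousLinearMap.ext fun z ↦ ?_⟩
  simpa using (LinearMap.congr_fun hc z).symm

end SpanOfKernels

section DualOfMinimalNorm

variable {B : Type*} [SeminormedAddCommGroup B] [NormedSpace ℝ B]

theorem Submodule.norm_mk_eq_of_forall_norm_le_norm_add (N : Submodule ℝ B) {x : B}
    (h : ∀ z ∈ N, ‖x‖ ≤ ‖x + z‖) : ‖(Submodule.Quotient.mk x : B ⧸ N)‖ = ‖x‖ := by
  refine le_antisymm (Submodule.Quotient.norm_mk_le N x) ?_
  refine QuotientAddGroup.le_norm_iff.2 fun w hw ↦ ?_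
  simpa using h _ ((Submodule.Quotient.eq N).1 hw)

theorem exists_dual_forall_mem_eq_zero_and_apply_eq_norm (N : Submodule ℝ B) {x : B}
    (h : ∀ z ∈ N, ‖x‖ ≤ ‖x + z‖) :
    ∃ φ : StrongDual ℝ B, (∀ z ∈ N, φ z = 0) ∧ ‖φ‖ ≤ 1 ∧ φ x = ‖x‖ := by
  obtain ⟨g, hg1, hgx⟩ := exists_dual_vector'' ℝ (N.mkQ x)
  refine ⟨g.comp N.mkQL, fun z hz ↦ ?_, ?_, ?_⟩
  · simp [(Submodule.Quotient.mk_eq_zero N).2 hz]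
  · refine ContinuousLinearMap.opNorm_le_bound _ zero_le_one fun z ↦ ?_
    calc ‖g (N.mkQ z)‖ ≤ 1 * ‖N.mkQ z‖ := g.le_of_opNorm_le hg1 _
      _ ≤ 1 * ‖z‖ := by gcongr; exact Submodule.Quotient.norm_mk_le N z
  · simpa [N.norm_mk_eq_of_forall_norm_le_norm_add h] using hgx

theorem StrongDual.apply_sub_le_norm_sub_norm {φ : StrongDual ℝ B} {x : B} (hφ : ‖φ‖ ≤ 1)
    (hx : φ x = ‖x‖) (g : B) : φ (g - x) ≤ ‖g‖ - ‖x‖ := by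
  have hg : φ g ≤ ‖g‖ := calc
    φ g ≤ ‖φ g‖ := le_abs_self _
    _ ≤ 1 * ‖g‖ := φ.le_of_opNorm_le hφ g
    _ = ‖g‖ := one_mul _
  rw [map_sub, hx]
  linarith

end DualOfMinimalNorm

theorem minimum_norm_interpolation_iff_subdifferential_general
    {B : Type*} [NormedAddCommGroup B] [NormedSpace ℝ B]
    {m : ℕ} (ν : Fin m → (B →L[ℝ] ℝ))
    (y : Fin m → ℝ) (fhat : B) :
    ((∀ j, ν j fhat = y j) ∧ ∀ f : B, (∀ j, ν j f = y j) → ‖fhat‖ ≤ ‖f‖) ↔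
      ((∀ j, ν j fhat = y j) ∧ ∃ c : Fin m → ℝ,
        ∀ g : B, (∑ j, c j • ν j) (g - fhat) ≤ ‖g‖ - ‖fhat‖) := by
  constructor
  · rintro ⟨hy, hmin⟩
    have mem_ker (z) :
        z ∈ LinearMap.ker (ContinuousLinearMap.pi ν : B →ₗ[ℝ] Fin m → ℝ) ↔ ∀ j, ν j z = 0 := by
      simp [funext_iff]
    obtain ⟨φ, hφN, hφ1, hφx⟩ := exists_dual_forall_mem_eq_zero_and_apply_eq_norm _
      fun z hz ↦ hmin _ fun j ↦ by simp [(mem_ker z).1 hz j, hy j]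
    obtain ⟨c, rfl⟩ := ContinuousLinearMap.exists_eq_sum_smul_of_forall_apply_eq_zero ν φ
      fun z hz ↦ hφN z ((mem_ker z).2 hz)
    exact ⟨hy, c, StrongDual.apply_sub_le_norm_sub_norm hφ1 hφx⟩
  · rintro ⟨hy, c, hc⟩
    refine ⟨hy, fun f hf ↦ ?_⟩
    have hconst : (∑ j, c j • ν j) (f - fhat) = 0 := by simp [hf, hy]
    linarith [hc f]

/-- `f̂` is a solution of the minimum norm interpolation problem with
data `y` iff `f̂ ∈ M_y` and some linear combination `Σ c_j ν_j` belongs to the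
subdifferential of the norm at `f̂`. -/
theorem minimum_norm_interpolation_iff_subdifferential
    {B : Type*} [NormedAddCommGroup B] [NormedSpace ℝ B] [CompleteSpace B]
    {m : ℕ} (ν : Fin m → (B →L[ℝ] ℝ)) (hν : LinearIndependent ℝ ν)
    (y : Fin m → ℝ) (fhat : B) :
    ((∀ j, ν j fhat = y j) ∧ ∀ f : B, (∀ j, ν j f = y j) → ‖fhat‖ ≤ ‖f‖) ↔
      ((∀ j, ν j fhat = y j) ∧ ∃ c : Fin m → ℝ,
        ∀ g : B, (∑ j, c j • ν j) (g - fhat) ≤ ‖g‖ - ‖fhat‖) :=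
  minimum_norm_interpolation_iff_subdifferential_general ν y fhat
end

section
/- Let B be a smooth real Banach space with dual space B*, let ν₁, …, ν_m ∈ B* be linearly independent, and let y ∈ ℝ^m. Then f̂ ∈ B is a solution of the minimum norm interpolation problem with data y if and only if f̂ ∈ M_y and there exist c₁, …, c_m ∈ ℝ such that G(f̂) = Σ_{j=1}^m c_j ν_j. -/
/-!
Along each line `t ↦ ‖f̂ + t • h‖` the functional `G f̂` is the derivative at `t = 0`. If `f̂` is a
minimal norm interpolant and `h` lies in every `ker ν_j`, the whole line stays in `M_y`, so the
derivative vanishes; a functional vanishing on `⋂ ker ν_j` lies in the span of the `ν_j`.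
Conversely, differentiating along `t ↦ (1 + t) • f̂` gives `G f̂ f̂ = ‖f̂‖`, and the lines are
`‖h‖`-Lipschitz, so `G f̂ h ≤ ‖h‖`. If `G f̂ = ∑ c_j ν_j`, then `G f̂` is constant on `M_y`, hence
`‖f̂‖ = G f̂ f̂ = G f̂ f ≤ ‖f‖` for every `f ∈ M_y`.
-/

open Filter Topology

section NormAlongLines

variable {E : Type*} [SeminormedAddCommGroup E] [NormedSpace ℝ E]

theorem hasDerivAt_norm_add_smul_of_tendsto {f h : E} {L : ℝ}
    (hL : Tendsto (fun t : ℝ => (‖f + t • h‖ - ‖f‖) / t) (𝓝[≠] 0) (𝓝 L)) :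
    HasDerivAt (fun t : ℝ => ‖f + t • h‖) L 0 := by
  rw [hasDerivAt_iff_tendsto_slope]
  refine hL.congr fun t => ?_
  simp [slope_def_field]

theorem lipschitzWith_norm_add_smul (f h : E) :
    LipschitzWith ‖h‖₊ fun t : ℝ => ‖f + t • h‖ :=
  LipschitzWith.of_dist_le_mul fun s t => by
    calc dist ‖f + s • h‖ ‖f + t • h‖ ≤ ‖(f + s • h) - (f + t • h)‖ := abs_norm_sub_norm_le _ _
      _ = ‖h‖ * dist s t := by rw [add_sub_add_left_eq_sub, ← sub_smul, norm_smul, mul_comm]; rfl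

theorem HasDerivAt.le_norm_of_norm_add_smul {f h : E} {L : ℝ}
    (hL : HasDerivAt (fun t : ℝ => ‖f + t • h‖) L 0) : L ≤ ‖h‖ :=
  (le_abs_self L).trans (hL.le_of_lipschitz (lipschitzWith_norm_add_smul f h))

theorem HasDerivAt.eq_norm_of_norm_add_smul_self {f : E} {L : ℝ}
    (hL : HasDerivAt (fun t : ℝ => ‖f + t • f‖) L 0) : L = ‖f‖ := by
  have hline : HasDerivAt (fun t : ℝ => (1 + t) * ‖f‖) ‖f‖ 0 := by
    simpa using ((hasDerivAt_id (0 : ℝ)).const_add 1).mul_const ‖f‖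
  refine hL.unique (hline.congr_of_eventuallyEq ?_)
  filter_upwards [Ioi_mem_nhds (show (-1 : ℝ) < 0 by norm_num)] with t ht
  rw [show f + t • f = (1 + t) • f by rw [add_smul, one_smul], norm_smul,
    Real.norm_of_nonneg (by linarith [Set.mem_Ioi.1 ht])]

end NormAlongLines

theorem ContinuousLinearMap.exists_eq_sum_smul_of_forall_eq_zero
    {ι 𝕜 E : Type*} [Fintype ι] [Field 𝕜] [TopologicalSpace 𝕜] [IsTopologicalSemiring 𝕜]
    [AddCommGroup E] [Module 𝕜 E] [TopologicalSpace E]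
    {L : ι → E →L[𝕜] 𝕜} {K : E →L[𝕜] 𝕜} (h : ∀ x, (∀ i, L i x = 0) → K x = 0) :
    ∃ c : ι → 𝕜, K = ∑ i, c i • L i := by
  have hK : (K : E →ₗ[𝕜] 𝕜) ∈ Submodule.span 𝕜 (Set.range fun i => (L i : E →ₗ[𝕜] 𝕜)) :=
    mem_span_of_iInf_ker_le_ker fun x hx => by
      simp only [Submodule.mem_iInf, LinearMap.mem_ker] at hx ⊢
      exact h x hx
  obtain ⟨c, hc⟩ := (Submodule.mem_span_range_iff_exists_fun 𝕜).1 hK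
  exact ⟨c, ext fun x => by simpa using (LinearMap.congr_fun hc x).symm⟩

theorem minimum_norm_interpolation_iff_gateaux_general
    {B : Type*} [NormedAddCommGroup B] [NormedSpace ℝ B]
    (G : B → (B →L[ℝ] ℝ)) (hG0 : G 0 = 0)
    (hG : ∀ f : B, f ≠ 0 → ∀ h : B,
      Tendsto (fun t : ℝ => (‖f + t • h‖ - ‖f‖) / t) (𝓝[≠] (0 : ℝ)) (𝓝 (G f h)))
    {m : ℕ} (ν : Fin m → (B →L[ℝ] ℝ))
    (y : Fin m → ℝ) (fhat : B) :
    ((∀ j, ν j fhat = y j) ∧ ∀ f : B, (∀ j, ν j f = y j) → ‖fhat‖ ≤ ‖f‖) ↔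
      ((∀ j, ν j fhat = y j) ∧ ∃ c : Fin m → ℝ, G fhat = ∑ j, c j • ν j) := by
  rcases eq_or_ne fhat 0 with rfl | hf0
  · simpa [hG0] using fun _ => ⟨0, by simp⟩
  have hderiv h := hasDerivAt_norm_add_smul_of_tendsto (hG fhat hf0 h)
  refine and_congr_right fun hmem => ⟨fun hmin => ?_, fun ⟨c, hc⟩ f hf => ?_⟩
  · refine ContinuousLinearMap.exists_eq_sum_smul_of_forall_eq_zero fun h hh =>
      (IsLocalMin.hasDerivAt_eq_zero (Eventually.of_forall fun t => ?_) (hderiv h))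
    simpa using hmin (fhat + t • h) (by simp [hh, hmem])
  · have hconst : G fhat f = G fhat fhat := by simp [hc, hf, hmem]
    calc ‖fhat‖ = G fhat fhat := ((hderiv fhat).eq_norm_of_norm_add_smul_self).symm
      _ = G fhat f := hconst.symm
      _ ≤ ‖f‖ := (hderiv f).le_norm_of_norm_add_smul

/-- In a smooth Banach space `B` (where `G f` is the Gâteaux derivative
of the norm at `f ≠ 0`, and `G 0 = 0` by convention), `f̂` is a solution of the minimum
norm interpolation problem with data `y` iff `f̂ ∈ M_y` and `G(f̂)` is a linear
combination of the functionals `ν_j`. -/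
theorem minimum_norm_interpolation_iff_gateaux
    {B : Type*} [NormedAddCommGroup B] [NormedSpace ℝ B] [CompleteSpace B]
    (G : B → (B →L[ℝ] ℝ)) (hG0 : G 0 = 0)
    (hG : ∀ f : B, f ≠ 0 → ∀ h : B,
      Tendsto (fun t : ℝ => (‖f + t • h‖ - ‖f‖) / t) (𝓝[≠] (0 : ℝ)) (𝓝 (G f h)))
    {m : ℕ} (ν : Fin m → (B →L[ℝ] ℝ)) (hν : LinearIndependent ℝ ν)
    (y : Fin m → ℝ) (fhat : B) :
    ((∀ j, ν j fhat = y j) ∧ ∀ f : B, (∀ j, ν j f = y j) → ‖fhat‖ ≤ ‖f‖) ↔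
      ((∀ j, ν j fhat = y j) ∧ ∃ c : Fin m → ℝ, G fhat = ∑ j, c j • ν j) :=
  minimum_norm_interpolation_iff_gateaux_general G hG0 hG ν y fhat
end

section
/- Let B be a real Banach space with dual space B* and canonical embedding J : B → B**, let ν₁, …, ν_m ∈ B* be linearly independent, and let y ∈ ℝ^m. Then f̂ ∈ B is a solution of the minimum norm interpolation problem with data y if and only if f̂ ∈ M_y and there exist c₁, …, c_m ∈ ℝ such that, with ν := Σ_{j=1}^m c_j ν_j and γ := ‖ν‖_{B*}, there is w ∈ ∂‖·‖_{B*}(ν) with J(f̂) = γ · w. -/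
/-!
`M_y` is the coset `f̂ + N` of the common kernel `N` of the `ν j`, so minimality of `f̂` says that
`‖f̂‖` is the quotient norm of `f̂` in `B ⧸ N`. By Hahn–Banach in `B ⧸ N` this holds iff some `φ`
vanishing on `N`, i.e. some `φ = ∑ c j • ν j`, has `‖φ‖ = ‖f̂‖` and `φ f̂ = ‖f̂‖ ^ 2`. On the dual
side, the subgradients of the norm at `φ` are the `w` with `‖w‖ ≤ 1` and `w φ = ‖φ‖`, and
`J f̂ = ‖φ‖ • w` for such a `w` is equivalent to the same two equations.
-/

open NormedSpace

section Seminormed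

variable {E : Type*} [SeminormedAddCommGroup E] [NormedSpace ℝ E]

theorem forall_apply_sub_le_norm_sub_norm_iff (w : StrongDual ℝ E) (x : E) :
    (∀ μ, w (μ - x) ≤ ‖μ‖ - ‖x‖) ↔ ‖w‖ ≤ 1 ∧ w x = ‖x‖ := by
  constructor
  · intro hw
    have hx : w x = ‖x‖ := by
      have h₀ := hw 0
      have h₂ := hw (2 • x)
      rw [zero_sub, map_neg, norm_zero] at h₀
      rw [two_nsmul, add_sub_cancel_right] at h₂
      linarith [norm_add_le x x]
    refine ⟨w.opNorm_le_bound zero_le_one fun μ => ?_, hx⟩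
    rw [one_mul, Real.norm_eq_abs, abs_le]
    have hpos := hw μ
    have hneg := hw (-μ)
    rw [map_sub, hx] at hpos hneg
    rw [map_neg, norm_neg] at hneg
    constructor <;> linarith
  · rintro ⟨hw, hx⟩ μ
    rw [map_sub, hx, sub_le_sub_iff_right]
    exact (le_abs_self _).trans (w.le_of_opNorm_le hw μ |>.trans_eq (one_mul _))

def dualityMap (x : E) : Set (StrongDual ℝ E) :=
  {φ | ‖φ‖ = ‖x‖ ∧ φ x = ‖x‖ ^ 2}

theorem mem_dualityMap_of_norm_le {x : E} {φ : StrongDual ℝ E} (hφ : ‖φ‖ ≤ ‖x‖)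
    (hφx : φ x = ‖x‖ ^ 2) : φ ∈ dualityMap x := by
  have : ‖x‖ ^ 2 ≤ ‖φ‖ * ‖x‖ := hφx ▸ (le_abs_self _).trans (φ.le_opNorm x)
  exact ⟨le_antisymm hφ (by nlinarith [norm_nonneg φ]), hφx⟩

theorem norm_le_norm_add_iff_exists_mem_dualityMap (N : Submodule ℝ E) (x : E) :
    (∀ n ∈ N, ‖x‖ ≤ ‖x + n‖) ↔ ∃ φ ∈ dualityMap x, N ≤ LinearMap.ker (φ : E →ₗ[ℝ] ℝ) := by
  constructor
  · intro hx
    have hq : ‖N.mkQ x‖ = ‖x‖ := by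
      refine le_antisymm (Submodule.Quotient.norm_mk_le N x) ?_
      refine QuotientAddGroup.le_norm_iff.mpr fun m hm => ?_
      have : m - x ∈ N := (Submodule.Quotient.eq N).mp hm
      simpa using hx _ this
    obtain ⟨g, hg, hgx⟩ := exists_dual_vector'' ℝ (N.mkQ x)
    have hgq : ‖g.comp N.mkQL‖ ≤ 1 :=
      (g.comp N.mkQL).opNorm_le_bound zero_le_one fun z =>
        (g.le_opNorm _).trans (by
          simpa using mul_le_mul hg (Submodule.Quotient.norm_mk_le N z) (norm_nonneg _) zero_le_one)
    refine ⟨‖x‖ • g.comp N.mkQL, mem_dualityMap_of_norm_le ?_ ?_, fun n hn => ?_⟩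
    · exact (ContinuousLinearMap.opNorm_smul_le _ _).trans
        (by simpa using mul_le_of_le_one_right (norm_nonneg x) hgq)
    · rw [smul_apply, ContinuousLinearMap.comp_apply, Submodule.mkQL_apply, hgx, hq,
        smul_eq_mul, sq]
      rfl
    · simp [LinearMap.mem_ker, (Submodule.Quotient.mk_eq_zero N).mpr hn]
  · rintro ⟨φ, ⟨hφ, hφx⟩, hφN⟩ n hn
    have hφn : φ (x + n) = ‖x‖ ^ 2 := by
      rw [map_add, hφx, show φ n = 0 from hφN hn, add_zero]
    have : ‖x‖ ^ 2 ≤ ‖x‖ * ‖x + n‖ := by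
      rw [← hφn, ← hφ]
      exact (le_abs_self _).trans (φ.le_opNorm _)
    nlinarith [norm_nonneg x, norm_nonneg (x + n)]

end Seminormed

section Normed

variable {E : Type*} [NormedAddCommGroup E] [NormedSpace ℝ E]

theorem exists_subgradient_smul_eq_inclusionInDoubleDual_iff (x : E) (φ : StrongDual ℝ E) :
    (∃ w : StrongDual ℝ (StrongDual ℝ E), (∀ μ, w (μ - φ) ≤ ‖μ‖ - ‖φ‖) ∧
        inclusionInDoubleDual ℝ E x = ‖φ‖ • w) ↔ φ ∈ dualityMap x := by
  have hJ : ‖inclusionInDoubleDual ℝ E x‖ = ‖x‖ := (inclusionInDoubleDualLi ℝ).norm_map x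
  simp_rw [forall_apply_sub_le_norm_sub_norm_iff]
  constructor
  · rintro ⟨w, ⟨hw, hwφ⟩, hxw⟩
    have hφx : φ x = ‖φ‖ ^ 2 := by
      rw [← dual_def ℝ E x φ, hxw, smul_apply, hwφ, smul_eq_mul, sq]
    have hxφ : ‖x‖ ≤ ‖φ‖ :=
      calc ‖x‖ ≤ ‖‖φ‖‖ * ‖w‖ := hJ ▸ hxw ▸ w.opNorm_smul_le _
        _ ≤ ‖φ‖ := by rw [norm_norm]; exact mul_le_of_le_one_right (norm_nonneg _) hw
    have hφ : ‖φ‖ ^ 2 ≤ ‖φ‖ * ‖x‖ := hφx ▸ (le_abs_self _).trans (φ.le_opNorm x)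
    have : ‖φ‖ = ‖x‖ := le_antisymm (by nlinarith [norm_nonneg x]) hxφ
    exact ⟨this, this ▸ hφx⟩
  · rintro ⟨hφ, hφx⟩
    rcases (norm_nonneg x).eq_or_lt with hx | hx
    · refine ⟨0, ⟨by simp, by simp [hφ, ← hx]⟩, ?_⟩
      rw [smul_zero]
      exact norm_eq_zero (a := inclusionInDoubleDual ℝ E x) |>.mp (hJ.trans hx.symm)
    · refine ⟨‖x‖⁻¹ • inclusionInDoubleDual ℝ E x, ⟨?_, ?_⟩, ?_⟩
      · calc _ ≤ ‖‖x‖⁻¹‖ * ‖inclusionInDoubleDual ℝ E x‖ :=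
              ContinuousLinearMap.opNorm_smul_le _ _
          _ = 1 := by rw [norm_inv, norm_norm, hJ, inv_mul_cancel₀ hx.ne']
      · rw [smul_apply, dual_def, hφx, hφ, smul_eq_mul]
        field_simp
      · rw [hφ, smul_smul, mul_inv_cancel₀ hx.ne', one_smul]

end Normed

theorem exists_sum_smul_eq_iff_iInf_ker_le_ker {𝕜 E ι : Type*} [NormedField 𝕜]
    [SeminormedAddCommGroup E] [NormedSpace 𝕜 E] [Fintype ι] (ν : ι → StrongDual 𝕜 E)
    (φ : StrongDual 𝕜 E) :
    (∃ c : ι → 𝕜, ∑ j, c j • ν j = φ) ↔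
      ⨅ j, LinearMap.ker (ν j : E →ₗ[𝕜] 𝕜) ≤ LinearMap.ker (φ : E →ₗ[𝕜] 𝕜) := by
  constructor
  · rintro ⟨c, rfl⟩ n hn
    simp_all [Submodule.mem_iInf]
  · intro hφ
    obtain ⟨c, hc⟩ :=
      (Submodule.mem_span_range_iff_exists_fun 𝕜).mp (mem_span_of_iInf_ker_le_ker hφ)
    exact ⟨c, ContinuousLinearMap.coe_injective (by simpa using hc)⟩

theorem forall_apply_eq_imp_norm_le_iff {E ι : Type*} [SeminormedAddCommGroup E]
    [NormedSpace ℝ E] (ν : ι → StrongDual ℝ E) (x : E) :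
    (∀ f, (∀ j, ν j f = ν j x) → ‖x‖ ≤ ‖f‖) ↔
      ∀ n ∈ ⨅ j, LinearMap.ker (ν j : E →ₗ[ℝ] ℝ), ‖x‖ ≤ ‖x + n‖ := by
  simp only [Submodule.mem_iInf, LinearMap.mem_ker, ContinuousLinearMap.coe_coe]
  refine ⟨fun h n hn => h _ fun j => by simp [hn], fun h f hf => ?_⟩
  simpa using h (f - x) fun j => by simp [hf]

theorem minimum_norm_interpolation_iff_dual_subdifferential_general
    {B : Type*} [NormedAddCommGroup B] [NormedSpace ℝ B]
    {m : ℕ} (ν : Fin m → (B →L[ℝ] ℝ))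
    (y : Fin m → ℝ) (fhat : B) :
    ((∀ j, ν j fhat = y j) ∧ ∀ f : B, (∀ j, ν j f = y j) → ‖fhat‖ ≤ ‖f‖) ↔
      ((∀ j, ν j fhat = y j) ∧ ∃ c : Fin m → ℝ,
        ∃ w : StrongDual ℝ (StrongDual ℝ B),
          (∀ μ : B →L[ℝ] ℝ, w (μ - ∑ j, c j • ν j) ≤ ‖μ‖ - ‖∑ j, c j • ν j‖) ∧
          NormedSpace.inclusionInDoubleDual ℝ B fhat = ‖∑ j, c j • ν j‖ • w) := by
  refine and_congr_right fun hfhat => ?_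
  obtain rfl : y = fun j => ν j fhat := funext fun j => (hfhat j).symm
  simp_rw [exists_subgradient_smul_eq_inclusionInDoubleDual_iff, forall_apply_eq_imp_norm_le_iff,
    norm_le_norm_add_iff_exists_mem_dualityMap, ← exists_sum_smul_eq_iff_iInf_ker_le_ker]
  constructor
  · rintro ⟨_, hφ, c, rfl⟩
    exact ⟨c, hφ⟩
  · rintro ⟨c, hc⟩
    exact ⟨_, hc, c, rfl⟩

/-- Explicit representer theorem: `f̂` is a solution of the minimum norm
interpolation problem with data `y` iff `f̂ ∈ M_y` and there exist coefficients `c_j`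
such that, with `ν := Σ c_j ν_j` and `γ := ‖ν‖`, one has `J(f̂) = γ • w` for some `w`
in the subdifferential of the dual norm at `ν`. -/
theorem minimum_norm_interpolation_iff_dual_subdifferential
    {B : Type*} [NormedAddCommGroup B] [NormedSpace ℝ B] [CompleteSpace B]
    {m : ℕ} (ν : Fin m → (B →L[ℝ] ℝ)) (hν : LinearIndependent ℝ ν)
    (y : Fin m → ℝ) (fhat : B) :
    ((∀ j, ν j fhat = y j) ∧ ∀ f : B, (∀ j, ν j f = y j) → ‖fhat‖ ≤ ‖f‖) ↔
      ((∀ j, ν j fhat = y j) ∧ ∃ c : Fin m → ℝ,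
        ∃ w : StrongDual ℝ (StrongDual ℝ B),
          (∀ μ : B →L[ℝ] ℝ, w (μ - ∑ j, c j • ν j) ≤ ‖μ‖ - ‖∑ j, c j • ν j‖) ∧
          NormedSpace.inclusionInDoubleDual ℝ B fhat = ‖∑ j, c j • ν j‖ • w) :=
  minimum_norm_interpolation_iff_dual_subdifferential_general ν y fhat
end

section
/- Let X be a real Banach space, B := X* its dual, and let η₁, …, η_m ∈ X be linearly independent. Let y ∈ ℝ^m. Then f̂ ∈ B is a solution of the minimum norm interpolation problem inf{‖f‖_B : f ∈ B, f(η_j) = y_j for all j} if and only if f̂(η_j) = y_j for all j and there exist c₁, …, c_m ∈ ℝ such that, with u := Σ_{j=1}^m c_j η_j ∈ X and γ := ‖u‖_X, there is w ∈ ∂‖·‖_X(u) ⊆ B with f̂ = γ · w. -/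
/-!
A minimal-norm interpolant `f̂` is, by Hahn–Banach, no longer than its restriction to the
finite-dimensional span `M` of the `η j`, and a functional on `M` attains its norm on the unit
sphere of `M`. This produces `u ∈ M` with `‖u‖ = ‖f̂‖` and `f̂ u = ‖f̂‖²`, and then `‖f̂‖⁻¹ • f̂`
is a subgradient of the norm at `u`. Conversely, if `f̂ = ‖u‖ • w` with `w` a subgradient at
`u ∈ M`, then `‖w‖ ≤ 1` and `w u = ‖u‖`, so every interpolant `f` satisfies
`‖u‖² = f̂ u = f u ≤ ‖f‖ ‖u‖`, whence `‖f̂‖ ≤ ‖u‖ ≤ ‖f‖`.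
-/

open Submodule

theorem norm_comp_subtypeL_eq_of_forall_eqOn_imp_norm_le
    {𝕜 : Type*} [NontriviallyNormedField 𝕜] [IsRCLikeNormedField 𝕜]
    {E : Type*} [SeminormedAddCommGroup E] [NormedSpace 𝕜 E]
    (p : Submodule 𝕜 E) (f : StrongDual 𝕜 E)
    (hmin : ∀ g : StrongDual 𝕜 E, (∀ x ∈ p, g x = f x) → ‖f‖ ≤ ‖g‖) :
    ‖f.comp p.subtypeL‖ = ‖f‖ := by
  obtain ⟨g, hg, hgnorm⟩ := exists_extension_norm_eq p (f.comp p.subtypeL)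
  refine le_antisymm ?_ (hgnorm ▸ hmin g fun x hx => hg ⟨x, hx⟩)
  calc ‖f.comp p.subtypeL‖ ≤ ‖f‖ * ‖p.subtypeL‖ := f.opNorm_comp_le _
    _ ≤ ‖f‖ := mul_le_of_le_one_right (norm_nonneg f) (norm_subtypeL_le p)

section RealNormed

variable {E : Type*} [NormedAddCommGroup E] [NormedSpace ℝ E]

theorem apply_sub_le_norm_sub_norm_iff {w : E →L[ℝ] ℝ} {u : E} :
    (∀ v, w (v - u) ≤ ‖v‖ - ‖u‖) ↔ ‖w‖ ≤ 1 ∧ w u = ‖u‖ := by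
  constructor
  · intro hw
    have hge : ‖u‖ ≤ w u := by simpa [map_neg] using hw 0
    have hle : w u ≤ ‖u‖ := by
      have := hw (2 • u)
      rw [two_smul, add_sub_cancel_right] at this
      linarith [norm_add_le u u]
    have hwu : w u = ‖u‖ := le_antisymm hle hge
    have hbound : ∀ v, w v ≤ ‖v‖ := fun v => by
      have := hw v
      rw [map_sub, hwu] at this
      linarith
    refine ⟨w.opNorm_le_bound zero_le_one fun v => ?_, hwu⟩
    rw [one_mul, Real.norm_eq_abs, abs_le]
    have := hbound (-v)
    rw [map_neg, norm_neg] at this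
    exact ⟨by linarith, hbound v⟩
  · rintro ⟨hw, hwu⟩ v
    rw [map_sub, hwu]
    have : w v ≤ ‖v‖ := calc
      w v ≤ ‖w v‖ := le_abs_self _
      _ ≤ ‖w‖ * ‖v‖ := w.le_opNorm v
      _ ≤ ‖v‖ := mul_le_of_le_one_left (norm_nonneg v) hw
    linarith

theorem exists_apply_sub_le_norm_sub_norm_and_eq_norm_smul {f : E →L[ℝ] ℝ} {u : E}
    (hu : ‖u‖ = ‖f‖) (hfu : f u = ‖f‖ ^ 2) :
    ∃ w : E →L[ℝ] ℝ, (∀ v, w (v - u) ≤ ‖v‖ - ‖u‖) ∧ f = ‖u‖ • w := by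
  refine ⟨‖f‖⁻¹ • f, apply_sub_le_norm_sub_norm_iff.2 ⟨?_, ?_⟩, ?_⟩
  · rw [norm_smul, norm_inv, norm_norm]
    exact inv_mul_le_one_of_le₀ le_rfl (norm_nonneg f)
  · rw [smul_apply, hfu, hu, smul_eq_mul]
    rcases eq_or_ne ‖f‖ 0 with h | h
    · simp [h]
    · field_simp
  · rcases eq_or_ne f 0 with rfl | hf
    · simp
    · rw [hu, smul_inv_smul₀ (norm_ne_zero_iff.2 hf)]

theorem norm_le_of_apply_eq_of_eq_norm_smul {f g w : E →L[ℝ] ℝ} {u : E}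
    (hw : ∀ v, w (v - u) ≤ ‖v‖ - ‖u‖) (hg : g = ‖u‖ • w) (hfu : f u = g u) : ‖g‖ ≤ ‖f‖ := by
  obtain ⟨hw1, hwu⟩ := apply_sub_le_norm_sub_norm_iff.1 hw
  have hgu : ‖g‖ ≤ ‖u‖ := by
    rw [hg, norm_smul, norm_norm]
    exact mul_le_of_le_one_right (norm_nonneg u) hw1
  have huf : ‖u‖ * ‖u‖ ≤ ‖f‖ * ‖u‖ := calc
    ‖u‖ * ‖u‖ = f u := by rw [hfu, hg, smul_apply, hwu, smul_eq_mul]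
    _ ≤ ‖f u‖ := le_abs_self _
    _ ≤ ‖f‖ * ‖u‖ := f.le_opNorm u
  rcases (norm_nonneg u).eq_or_lt with h0 | hpos
  · exact hgu.trans (h0 ▸ norm_nonneg f)
  · exact hgu.trans (le_of_mul_le_mul_right huf hpos)

theorem exists_norm_eq_one_apply_eq_norm [FiniteDimensional ℝ E] [Nontrivial E]
    (f : E →L[ℝ] ℝ) : ∃ x, ‖x‖ = 1 ∧ f x = ‖f‖ := by
  obtain ⟨x, hx, hfx⟩ := (isCompact_sphere (0 : E) 1).exists_sSup_image_eq
    (NormedSpace.sphere_nonempty.2 zero_le_one) f.continuous.norm.continuousOn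
  rw [f.sSup_sphere_eq_norm, Real.norm_eq_abs] at hfx
  rw [mem_sphere_zero_iff_norm] at hx
  rcases abs_choice (f x) with h | h
  · exact ⟨x, hx, by rw [hfx, h]⟩
  · exact ⟨-x, by rw [norm_neg, hx], by rw [hfx, h, map_neg]⟩

theorem exists_norm_eq_apply_eq_sq [FiniteDimensional ℝ E] (f : E →L[ℝ] ℝ) :
    ∃ u, ‖u‖ = ‖f‖ ∧ f u = ‖f‖ ^ 2 := by
  rcases subsingleton_or_nontrivial E with _ | _
  · exact ⟨0, by simp [f.opNorm_subsingleton]⟩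
  · obtain ⟨x, hx, hfx⟩ := exists_norm_eq_one_apply_eq_norm f
    refine ⟨‖f‖ • x, ?_, ?_⟩
    · rw [norm_smul, norm_norm, hx, mul_one]
    · rw [map_smul, hfx, smul_eq_mul, sq]

end RealNormed

theorem minimum_norm_interpolation_predual_iff_subdifferential_general
    {X : Type*} [NormedAddCommGroup X] [NormedSpace ℝ X]
    {m : ℕ} (η : Fin m → X)
    (y : Fin m → ℝ) (fhat : X →L[ℝ] ℝ) :
    ((∀ j, fhat (η j) = y j) ∧
        ∀ f : X →L[ℝ] ℝ, (∀ j, f (η j) = y j) → ‖fhat‖ ≤ ‖f‖) ↔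
      ((∀ j, fhat (η j) = y j) ∧ ∃ c : Fin m → ℝ, ∃ w : X →L[ℝ] ℝ,
        (∀ v : X, w (v - ∑ j, c j • η j) ≤ ‖v‖ - ‖∑ j, c j • η j‖) ∧
        fhat = ‖∑ j, c j • η j‖ • w) := by
  set M := span ℝ (Set.range η)
  have : FiniteDimensional ℝ M := .span_of_finite ℝ (Set.finite_range η)
  have hηM : ∀ j, η j ∈ M := fun j => subset_span ⟨j, rfl⟩
  constructor
  · rintro ⟨hint, hmin⟩
    refine ⟨hint, ?_⟩
    have hMnorm := norm_comp_subtypeL_eq_of_forall_eqOn_imp_norm_le M fhat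
      fun f hf => hmin f fun j => (hf _ (hηM j)).trans (hint j)
    obtain ⟨u, hu, hfu⟩ := exists_norm_eq_apply_eq_sq (fhat.comp M.subtypeL)
    rw [hMnorm, coe_norm] at hu
    rw [hMnorm, ContinuousLinearMap.comp_apply, subtypeL_apply] at hfu
    obtain ⟨c, hc⟩ := (mem_span_range_iff_exists_fun ℝ).1 u.2
    rw [← hc] at hu hfu
    exact ⟨c, exists_apply_sub_le_norm_sub_norm_and_eq_norm_smul hu hfu⟩
  · rintro ⟨hint, c, w, hw, hfhat⟩
    refine ⟨hint, fun f hf => norm_le_of_apply_eq_of_eq_norm_smul hw hfhat ?_⟩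
    refine LinearMap.eqOn_span (f := (f : X →ₗ[ℝ] ℝ)) (g := fhat) ?_
      (sum_mem fun j _ => smul_mem _ _ (hηM j))
    rintro _ ⟨j, rfl⟩
    exact (hf j).trans (hint j).symm

/-- Explicit representer theorem in a dual space `B = X*`: `f̂` is a
solution of the minimum norm interpolation problem with data `y` iff it interpolates
and `f̂ = γ • w` for some `w ∈ ∂‖·‖_X(u)`, where `u = Σ c_j η_j` and `γ = ‖u‖`. -/
theorem minimum_norm_interpolation_predual_iff_subdifferential
    {X : Type*} [NormedAddCommGroup X] [NormedSpace ℝ X] [CompleteSpace X]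
    {m : ℕ} (η : Fin m → X) (hη : LinearIndependent ℝ η)
    (y : Fin m → ℝ) (fhat : X →L[ℝ] ℝ) :
    ((∀ j, fhat (η j) = y j) ∧
        ∀ f : X →L[ℝ] ℝ, (∀ j, f (η j) = y j) → ‖fhat‖ ≤ ‖f‖) ↔
      ((∀ j, fhat (η j) = y j) ∧ ∃ c : Fin m → ℝ, ∃ w : X →L[ℝ] ℝ,
        (∀ v : X, w (v - ∑ j, c j • η j) ≤ ‖v‖ - ‖∑ j, c j • η j‖) ∧
        fhat = ‖∑ j, c j • η j‖ • w) :=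
  minimum_norm_interpolation_predual_iff_subdifferential_general η y fhat
end

section
/- Let u = (u_i)_{i∈ℕ} be a nonzero element of c₀ and let x = (x_i)_{i∈ℕ} ∈ ℓ₁(ℕ). Then x satisfies ‖v‖_∞ − ‖u‖_∞ ≥ Σ_{i∈ℕ} x_i (v_i − u_i) for all v ∈ c₀ if and only if x belongs to the convex hull of V(u) := {sign(u_i) e_i : i ∈ N(u)}, where N(u) := {i ∈ ℕ : |u_i| = ‖u‖_∞} (a finite set) and e_i ∈ ℓ₁(ℕ) is the i-th standard unit sequence. -/
/-!
Testing the subgradient inequality at `v = 0` and at `v + u` shows `‖u‖_∞ ≤ ⟨x, u⟩` and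
`‖x‖₁ ≤ 1`. Since `⟨x, u⟩ ≤ ‖x‖₁ ‖u‖_∞` termwise, all these inequalities are equalities, so
`x_i u_i = |x_i| ‖u‖_∞` for every `i`: `x` lives on the finite set `N(u)`, where
`x_i = |x_i| sign(u_i)`, and is the convex combination of the vertices `sign(u_i) e_i` with
weights `|x_i|`. Conversely each vertex satisfies the inequality, and the solution set of the
inequality is convex.
-/

open Filter Topology

namespace Real

lemma sign_mul_self (a : ℝ) : sign a * a = |a| := by
  rcases lt_trichotomy a 0 with h | rfl | h
  · rw [sign_of_neg h, abs_of_neg h]; ring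
  · simp
  · rw [sign_of_pos h, abs_of_pos h]; ring

lemma abs_sign_le_one (a : ℝ) : |sign a| ≤ 1 := by
  rcases sign_apply_eq a with h | h | h <;> simp [h]

lemma sign_mul_le_abs (a b : ℝ) : sign a * b ≤ |b| :=
  calc sign a * b ≤ |sign a| * |b| := abs_mul (sign a) b ▸ le_abs_self _
    _ ≤ |b| := mul_le_of_le_one_left (abs_nonneg b) (abs_sign_le_one a)

end Real

lemma abs_eq_of_mul_eq_abs_mul {a b M : ℝ} (hb : |b| ≤ M) (h : a * b = |a| * M) (ha : a ≠ 0) :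
    |b| = M := by
  refine le_antisymm hb (le_of_mul_le_mul_left ?_ (abs_pos.mpr ha))
  calc |a| * M = a * b := h.symm
    _ ≤ |a| * |b| := abs_mul a b ▸ le_abs_self _

lemma eq_abs_mul_sign_of_mul_eq_abs_mul {a b M : ℝ} (hM : 0 < M) (h : a * b = |a| * M) :
    a = |a| * Real.sign b := by
  have hpos : 0 ≤ a * b := h ▸ mul_nonneg (abs_nonneg a) hM.le
  rcases lt_trichotomy b 0 with hb | rfl | hb
  · rw [Real.sign_of_neg hb, abs_of_nonpos (nonpos_of_mul_nonneg_left hpos hb)]; ring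
  · simpa [hM.ne'] using h
  · rw [Real.sign_of_pos hb, abs_of_nonneg (nonneg_of_mul_nonneg_left hpos hb), mul_one]

section SupNorm

variable {ι : Type*} {f g : ι → ℝ}

lemma iSup_abs_add_le [Nonempty ι] (hf : BddAbove (Set.range fun i => |f i|))
    (hg : BddAbove (Set.range fun i => |g i|)) :
    ⨆ i, |f i + g i| ≤ (⨆ i, |f i|) + ⨆ i, |g i| :=
  ciSup_le fun i => (abs_add_le _ _).trans (add_le_add (le_ciSup hf i) (le_ciSup hg i))

lemma iSup_abs_pos (hf : BddAbove (Set.range fun i => |f i|)) (hne : f ≠ 0) :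
    0 < ⨆ i, |f i| := by
  obtain ⟨i, hi⟩ := Function.ne_iff.mp hne
  exact (abs_pos.mpr hi).trans_le (le_ciSup hf i)

lemma bddAbove_range_abs_of_tendsto_zero {u : ℕ → ℝ} (hu : Tendsto u atTop (𝓝 0)) :
    BddAbove (Set.range fun i => |u i|) :=
  hu.abs.bddAbove_range

lemma finite_setOf_abs_eq_of_tendsto_zero {u : ℕ → ℝ} (hu : Tendsto u atTop (𝓝 0)) {M : ℝ}
    (hM : 0 < M) : {i | |u i| = M}.Finite := by
  have hsmall : ∀ᶠ i in cofinite, |u i| < M := by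
    rw [Nat.cofinite_eq_atTop]
    simpa using hu.abs.eventually (eventually_lt_nhds (by simpa using hM))
  exact (eventually_cofinite.mp hsmall).subset fun i (hi : |u i| = M) => by simp [hi]

end SupNorm

section Duality

variable {ι : Type*} {x w : ι → ℝ} {M : ℝ}

lemma summable_mul_of_summable_abs (hx : Summable fun i => |x i|) (hw : ∀ i, |w i| ≤ M) :
    Summable fun i => x i * w i :=
  (hx.mul_right M).of_norm_bounded fun i => by
    rw [Real.norm_eq_abs, abs_mul]; exact mul_le_mul_of_nonneg_left (hw i) (abs_nonneg _)

lemma mul_le_abs_mul (hw : ∀ i, |w i| ≤ M) (i : ι) : x i * w i ≤ |x i| * M :=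
  calc x i * w i ≤ |x i| * |w i| := abs_mul (x i) (w i) ▸ le_abs_self _
    _ ≤ |x i| * M := mul_le_mul_of_nonneg_left (hw i) (abs_nonneg _)

lemma tsum_mul_le_tsum_abs_mul (hx : Summable fun i => |x i|) (hw : ∀ i, |w i| ≤ M) :
    ∑' i, x i * w i ≤ (∑' i, |x i|) * M :=
  hx.tsum_mul_right M ▸
    (summable_mul_of_summable_abs hx hw).tsum_le_tsum (mul_le_abs_mul hw) (hx.mul_right M)

lemma one_le_tsum_abs_of_le_tsum_mul (hx : Summable fun i => |x i|) (hw : ∀ i, |w i| ≤ M)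
    (hM : 0 < M) (hle : M ≤ ∑' i, x i * w i) : 1 ≤ ∑' i, |x i| :=
  le_of_mul_le_mul_right (by simpa using hle.trans (tsum_mul_le_tsum_abs_mul hx hw)) hM

lemma mul_eq_abs_mul_of_le_tsum_mul (hx : Summable fun i => |x i|) (hw : ∀ i, |w i| ≤ M)
    (hx1 : ∑' i, |x i| ≤ 1) (hle : M ≤ ∑' i, x i * w i) (i : ι) : x i * w i = |x i| * M := by
  by_contra hne
  have hlt := (summable_mul_of_summable_abs hx hw).tsum_lt_tsum (mul_le_abs_mul hw)
    ((mul_le_abs_mul hw i).lt_of_ne hne) (hx.mul_right M)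
  have hM : 0 ≤ M := (abs_nonneg _).trans (hw i)
  rw [hx.tsum_mul_right] at hlt
  nlinarith

lemma convex_setOf_summable_tsum_mul_le (w : ι → ℝ) (c : ℝ) :
    Convex ℝ {x : ι → ℝ | (Summable fun i => x i * w i) ∧ ∑' i, x i * w i ≤ c} := by
  rintro x ⟨hx, hxc⟩ y ⟨hy, hyc⟩ a b ha hb hab
  have hcomb : (fun i => (a • x + b • y) i * w i) = fun i => a * (x i * w i) + b * (y i * w i) := by
    funext i; simp only [Pi.add_apply, Pi.smul_apply, smul_eq_mul]; ring
  refine ⟨hcomb ▸ (hx.mul_left a).add (hy.mul_left b), ?_⟩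
  rw [hcomb, (hx.mul_left a).tsum_add (hy.mul_left b), hx.tsum_mul_left, hy.tsum_mul_left]
  calc a * ∑' i, x i * w i + b * ∑' i, y i * w i ≤ a * c + b * c :=
        add_le_add (mul_le_mul_of_nonneg_left hxc ha) (mul_le_mul_of_nonneg_left hyc hb)
    _ = c := by rw [← add_mul, hab, one_mul]

lemma hasSum_smul_single_mul [DecidableEq ι] (i : ι) (a : ℝ) (w : ι → ℝ) :
    HasSum (fun j => (a • Pi.single i 1 : ι → ℝ) j * w j) (a * w i) := by
  convert hasSum_single (f := fun j => (a • Pi.single i 1 : ι → ℝ) j * w j) i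
    (fun j hj => by simp [Pi.single_eq_of_ne hj]) using 1
  simp

end Duality

lemma tsum_abs_le_one_of_tsum_mul_le_iSup_abs {x : ℕ → ℝ} (hx : Summable fun i => |x i|)
    (H : ∀ v : ℕ → ℝ, Tendsto v atTop (𝓝 0) → ∑' i, x i * v i ≤ ⨆ i, |v i|) :
    ∑' i, |x i| ≤ 1 := by
  refine hx.tsum_le_of_sum_le fun F => ?_
  set v : ℕ → ℝ := fun i => if i ∈ F then Real.sign (x i) else 0
  have hv : Tendsto v atTop (𝓝 0) := by
    refine tendsto_const_nhds.congr' ?_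
    rw [← Nat.cofinite_eq_atTop]
    filter_upwards [F.finite_toSet.compl_mem_cofinite] with i hi
    simp [v, show i ∉ F from hi]
  have hxv : ∑' i, x i * v i = ∑ i ∈ F, |x i| := by
    rw [tsum_eq_sum (s := F) fun i hi => by simp [v, hi]]
    refine Finset.sum_congr rfl fun i hi => ?_
    simp only [v, if_pos hi]
    rw [mul_comm, Real.sign_mul_self]
  have hv1 : ⨆ i, |v i| ≤ 1 :=
    ciSup_le fun i => by
      by_cases hi : i ∈ F
      · simpa [v, hi] using Real.abs_sign_le_one (x i)
      · simp [v, hi]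
  exact hxv ▸ (H v hv).trans hv1

def IsSupNormSubgradient (u x : ℕ → ℝ) : Prop :=
  ∀ v : ℕ → ℝ, Tendsto v atTop (𝓝 0) → ∑' i, x i * (v i - u i) ≤ (⨆ i, |v i|) - ⨆ i, |u i|

/-- The vertex set `V(u)`. -/
def signedPeakVectors (u : ℕ → ℝ) : Set (ℕ → ℝ) :=
  {z | ∃ i : ℕ, |u i| = (⨆ k, |u k|) ∧ z = Real.sign (u i) • (Pi.single i (1 : ℝ) : ℕ → ℝ)}

namespace IsSupNormSubgradient

variable {u x : ℕ → ℝ}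

lemma iSup_abs_le_tsum_mul (h : IsSupNormSubgradient u x) : ⨆ i, |u i| ≤ ∑' i, x i * u i := by
  have h0 := h 0 tendsto_const_nhds
  simp only [Pi.zero_apply, zero_sub, mul_neg, tsum_neg, abs_zero, ciSup_const] at h0
  linarith

lemma tsum_mul_le_iSup_abs (h : IsSupNormSubgradient u x) (hu : Tendsto u atTop (𝓝 0))
    (v : ℕ → ℝ) (hv : Tendsto v atTop (𝓝 0)) : ∑' i, x i * v i ≤ ⨆ i, |v i| := by
  have hvu := h (fun i => v i + u i) (by simpa using hv.add hu)
  simp only [add_sub_cancel_right] at hvu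
  linarith [iSup_abs_add_le (bddAbove_range_abs_of_tendsto_zero hv)
    (bddAbove_range_abs_of_tendsto_zero hu)]

lemma mem_convexHull (h : IsSupNormSubgradient u x) (hu : Tendsto u atTop (𝓝 0)) (hune : u ≠ 0)
    (hx : Summable fun i => |x i|) : x ∈ convexHull ℝ (signedPeakVectors u) := by
  set M := ⨆ i, |u i|
  have hbdd := bddAbove_range_abs_of_tendsto_zero hu
  have hub : ∀ i, |u i| ≤ M := le_ciSup hbdd
  have hM : 0 < M := iSup_abs_pos hbdd hune
  have hx1 : ∑' i, |x i| ≤ 1 :=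
    tsum_abs_le_one_of_tsum_mul_le_iSup_abs hx (h.tsum_mul_le_iSup_abs hu)
  have hxu : ∀ i, x i * u i = |x i| * M :=
    mul_eq_abs_mul_of_le_tsum_mul hx hub hx1 h.iSup_abs_le_tsum_mul
  set s := (finite_setOf_abs_eq_of_tendsto_zero hu hM).toFinset
  have hsupp : ∀ i ∉ s, x i = 0 := fun i hi => by
    by_contra hxi
    exact hi (by simpa [s] using abs_eq_of_mul_eq_abs_mul (hub i) (hxu i) hxi)
  have hsum : ∑ i ∈ s, |x i| = 1 := by
    have hfin : ∑' i, |x i| = ∑ i ∈ s, |x i| := tsum_eq_sum fun i hi => by simp [hsupp i hi]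
    rw [← hfin]
    exact le_antisymm hx1 (one_le_tsum_abs_of_le_tsum_mul hx hub hM h.iSup_abs_le_tsum_mul)
  have hx_eq : x = ∑ i ∈ s, |x i| • (Real.sign (u i) • (Pi.single i (1 : ℝ) : ℕ → ℝ)) := by
    funext j
    simp only [← Pi.single_smul, smul_eq_mul, mul_one,
      ← eq_abs_mul_sign_of_mul_eq_abs_mul hM (hxu _), Finset.sum_apply, Finset.sum_pi_single]
    split_ifs with hj
    · rfl
    · exact hsupp j hj
  rw [hx_eq]
  exact (convex_convexHull ℝ _).sum_mem (fun i _ => abs_nonneg _) hsum fun i hi =>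
    subset_convexHull ℝ _ ⟨i, by simpa [s] using hi, rfl⟩

end IsSupNormSubgradient

lemma isSupNormSubgradient_of_mem_convexHull {u x : ℕ → ℝ}
    (hx : x ∈ convexHull ℝ (signedPeakVectors u)) : IsSupNormSubgradient u x := by
  intro v hv
  suffices signedPeakVectors u ⊆ {y | (Summable fun i => y i * (v i - u i)) ∧
      ∑' i, y i * (v i - u i) ≤ (⨆ i, |v i|) - ⨆ i, |u i|} from
    (convexHull_min this (convex_setOf_summable_tsum_mul_le _ _) hx).2
  rintro _ ⟨i, hi, rfl⟩
  have hsum := hasSum_smul_single_mul i (Real.sign (u i)) fun j => v j - u j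
  refine ⟨hsum.summable, ?_⟩
  rw [hsum.tsum_eq, mul_sub, Real.sign_mul_self, hi]
  linarith [Real.sign_mul_le_abs (u i) (v i), le_ciSup (bddAbove_range_abs_of_tendsto_zero hv) i]

/-- Subdifferential of the sup-norm of `c₀` at a nonzero `u`:
an `ℓ₁` sequence `x` satisfies `Σ_i x_i (v_i − u_i) ≤ ‖v‖_∞ − ‖u‖_∞` for all `v ∈ c₀`
iff `x` lies in the convex hull of `{sign(u_i) e_i : |u_i| = ‖u‖_∞}`. -/
theorem subdifferential_supNorm_c0
    (u : ℕ → ℝ) (hu : Tendsto u atTop (𝓝 0)) (hune : u ≠ 0)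
    (x : ℕ → ℝ) (hx : Summable fun i => |x i|) :
    (∀ v : ℕ → ℝ, Tendsto v atTop (𝓝 0) →
        ∑' i, x i * (v i - u i) ≤ (⨆ i, |v i|) - ⨆ i, |u i|) ↔
      x ∈ convexHull ℝ
        {z : ℕ → ℝ | ∃ i : ℕ, |u i| = (⨆ k, |u k|) ∧
          z = Real.sign (u i) • (Pi.single i (1 : ℝ) : ℕ → ℝ)} :=
  ⟨fun h => IsSupNormSubgradient.mem_convexHull h hu hune hx,
    isSupNormSubgradient_of_mem_convexHull⟩
end

section
/- Let u₁, …, u_m ∈ c₀ be linearly independent and let y ∈ ℝ^m. Then x̂ ∈ ℓ₁(ℕ) is a solution of the minimum norm interpolation problem inf{‖x‖₁ : x ∈ ℓ₁(ℕ), ⟨u_j, x⟩ = y_j for all j} if and only if ⟨u_j, x̂⟩ = y_j for all j and there exist c₁, …, c_m ∈ ℝ such that, with u := Σ_{j=1}^m c_j u_j, one has x̂ = ‖u‖_∞ · w for some w in the convex hull of V(u) := {sign(u_i) e_i : i ∈ N(u)}, where N(u) := {i ∈ ℕ : |u_i| = ‖u‖_∞}. -/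
/-!
`x̂` is a minimizer iff some `U = ∑ cⱼ uⱼ` is a subgradient of `‖·‖₁` at `x̂`, i.e. `|Uᵢ| ≤ 1`
and `Uᵢ x̂ᵢ = |x̂ᵢ|` for all `i`. Sufficiency: `‖x̂‖₁ = ⟨U, x̂⟩ = ⟨U, x⟩ ≤ ‖x‖₁` for every
interpolant `x`. Necessity is Hahn–Banach: in the quotient of `ℓ¹` by the common kernel of the
functionals `⟨uⱼ, ·⟩` the class of `x̂` has norm `‖x̂‖₁`, and a norming functional of that class
vanishes on the kernel, hence is a combination of the `⟨uⱼ, ·⟩`.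

Since `U ∈ c₀`, `|Uᵢ| = 1` holds only for finitely many `i`, so `x̂ / ‖x̂‖₁` is a finite convex
combination of the vectors `sign(Uᵢ) eᵢ` with `|Uᵢ| = 1 = ‖U‖_∞`; rescaling `U` by `‖x̂‖₁` gives the
stated form. Conversely, for `w ∈ conv V(U)` the vector `U / ‖U‖_∞` is a subgradient at `‖U‖_∞ • w`.
-/

open Filter Topology lp ENNReal

theorem Real.abs_sign_le_one_s12 (r : ℝ) : |Real.sign r| ≤ 1 := by
  rcases Real.sign_apply_eq r with h | h | h <;> simp [h]

theorem Real.mul_sign_self (r : ℝ) : r * Real.sign r = |r| := by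
  rcases lt_trichotomy r 0 with h | rfl | h
  · simp [Real.sign_of_neg h, abs_of_neg h]
  · simp
  · simp [Real.sign_of_pos h, abs_of_pos h]

variable {ι κ : Type*}

theorem memℓp_one_iff_summable_abs {x : ι → ℝ} : Memℓp x 1 ↔ Summable fun i => |x i| := by
  rw [memℓp_gen_iff (by norm_num)]
  simp

theorem lp.norm_eq_tsum_abs (x : ℓ¹(ι, ℝ)) : ‖x‖ = ∑' i, |x i| := by
  rw [lp.norm_eq_tsum_rpow (by norm_num)]
  simp

theorem summable_mul_of_memℓp_infty {a x : ι → ℝ} (ha : Memℓp a ∞)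
    (hx : Summable fun i => |x i|) : Summable fun i => a i * x i := by
  obtain ⟨M, hM⟩ := memℓp_infty_iff.1 ha
  refine Summable.of_norm_bounded (hx.mul_left M) fun i => ?_
  rw [norm_mul]
  exact mul_le_mul_of_nonneg_right (hM ⟨i, rfl⟩) (abs_nonneg _)

theorem tsum_mul_le_tsum_abs {a x : ι → ℝ} (ha : ∀ i, |a i| ≤ 1)
    (hx : Summable fun i => |x i|) : ∑' i, a i * x i ≤ ∑' i, |x i| := by
  refine Summable.tsum_le_tsum (fun i => ?_) ?_ hx
  · calc a i * x i ≤ |a i| * |x i| := by rw [← abs_mul]; exact le_abs_self _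
      _ ≤ |x i| := mul_le_of_le_one_left (abs_nonneg _) (ha i)
  · exact summable_mul_of_memℓp_infty (memℓp_infty_iff.2 ⟨1, Set.forall_mem_range.2 ha⟩) hx

theorem tsum_sum_smul_mul [Fintype κ] {u : κ → ι → ℝ} (hu : ∀ j, Memℓp (u j) ∞) (c : κ → ℝ)
    {x : ι → ℝ} (hx : Summable fun i => |x i|) :
    ∑' i, (∑ j, c j • u j) i * x i = ∑ j, c j * ∑' i, u j i * x i := by
  simp only [Finset.sum_apply, Pi.smul_apply, smul_eq_mul, Finset.sum_mul, mul_assoc]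
  rw [Summable.tsum_finsetSum fun j _ => (summable_mul_of_memℓp_infty (hu j) hx).mul_left _]
  simp only [tsum_mul_left]

theorem tsum_mul_pi_single [DecidableEq ι] (a : ι → ℝ) (i : ι) (r : ℝ) :
    ∑' k, a k * (Pi.single i r : ι → ℝ) k = a i * r := by
  rw [tsum_eq_single i fun k hk => by simp [Pi.single_eq_of_ne hk]]
  simp

theorem abs_le_one_of_forall_tsum_mul_le {U : ι → ℝ}
    (h : ∀ x : ℓ¹(ι, ℝ), ∑' i, U i * x i ≤ ‖x‖) (i : ι) : |U i| ≤ 1 := by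
  classical
  have key : ∀ r : ℝ, U i * r ≤ |r| := fun r => by
    simpa [lp.single_apply, tsum_mul_pi_single, lp.norm_single] using h (lp.single 1 i r)
  have h₁ := key 1
  have h₂ := key (-1)
  norm_num at h₁ h₂
  exact abs_le.2 ⟨by linarith, h₁⟩

theorem exists_combination_norming_of_minimal {E : Type*} [SeminormedAddCommGroup E]
    [NormedSpace ℝ E] [Fintype κ] (ℓ : κ → E →ₗ[ℝ] ℝ) {x₀ : E}
    (hmin : ∀ x, (∀ j, ℓ j x = ℓ j x₀) → ‖x₀‖ ≤ ‖x‖) :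
    ∃ c : κ → ℝ, (∀ x, (∑ j, c j • ℓ j) x ≤ ‖x‖) ∧ (∑ j, c j • ℓ j) x₀ = ‖x₀‖ := by
  set K := ⨅ j, LinearMap.ker (ℓ j)
  obtain ⟨φ, hφ, hφx₀⟩ := exists_dual_vector'' ℝ (K.mkQ x₀)
  have hnorm : ‖K.mkQ x₀‖ = ‖x₀‖ := by
    refine le_antisymm (Submodule.Quotient.norm_mk_le K x₀)
      (QuotientAddGroup.le_norm_iff.2 fun x hx => hmin x ?_)
    have hmem : x - x₀ ∈ K := (Submodule.Quotient.eq K).1 hx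
    intro j
    simpa [sub_eq_zero] using Submodule.mem_iInf _ |>.1 hmem j
  have hspan : φ.toLinearMap ∘ₗ K.mkQ ∈ Submodule.span ℝ (Set.range ℓ) :=
    mem_span_of_iInf_ker_le_ker fun x hx => by
      simp [(Submodule.Quotient.mk_eq_zero K).2 hx]
  obtain ⟨c, hc⟩ := (Submodule.mem_span_range_iff_exists_fun ℝ).1 hspan
  refine ⟨c, fun x => ?_, ?_⟩ <;> rw [hc]
  · calc φ (K.mkQ x) ≤ ‖φ‖ * ‖K.mkQ x‖ := (le_abs_self _).trans (φ.le_opNorm _)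
      _ ≤ 1 * ‖x‖ := mul_le_mul hφ (Submodule.Quotient.norm_mk_le K x) (norm_nonneg _) zero_le_one
      _ = ‖x‖ := one_mul _
  · exact hφx₀.trans hnorm

def IsL1Subgradient (U x : ι → ℝ) : Prop :=
  (∀ i, |U i| ≤ 1) ∧ ∀ i, U i * x i = |x i|

theorem isL1Subgradient_iff_tsum {U x : ι → ℝ} (hx : Summable fun i => |x i|) :
    IsL1Subgradient U x ↔ (∀ i, |U i| ≤ 1) ∧ ∑' i, U i * x i = ∑' i, |x i| := by
  refine and_congr_right fun hU => ⟨tsum_congr, fun h => ?_⟩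
  have hle : ∀ i, U i * x i ≤ |x i| := fun i =>
    (le_abs_self _).trans (by rw [abs_mul]; exact mul_le_of_le_one_left (abs_nonneg _) (hU i))
  by_contra! ⟨i, hi⟩
  have hUx := summable_mul_of_memℓp_infty (memℓp_infty_iff.2 ⟨1, Set.forall_mem_range.2 hU⟩) hx
  exact (Summable.tsum_lt_tsum hle ((hle i).lt_of_ne hi) hUx hx).ne h

theorem isMinimal_iff_exists_isL1Subgradient [Fintype κ] {u : κ → ι → ℝ}
    (hu : ∀ j, Memℓp (u j) ∞) {y : κ → ℝ} {x₀ : ι → ℝ} (hx₀ : Summable fun i => |x₀ i|)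
    (hint : ∀ j, ∑' i, u j i * x₀ i = y j) :
    (∀ x : ι → ℝ, Summable (fun i => |x i|) →
        (∀ j, ∑' i, u j i * x i = y j) → ∑' i, |x₀ i| ≤ ∑' i, |x i|) ↔
      ∃ c : κ → ℝ, IsL1Subgradient (∑ j, c j • u j) x₀ := by
  constructor
  · intro hmin
    let ℓ : κ → ℓ¹(ι, ℝ) →ₗ[ℝ] ℝ := fun j =>
      lp.dualPairing ∞ 1 (fun _ => ContinuousLinearMap.mul ℝ ℝ) (K := 1)
        (fun _ => ContinuousLinearMap.opNorm_mul_le ℝ ℝ) ⟨u j, hu j⟩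
    have hℓ : ∀ (c : κ → ℝ) (x : ℓ¹(ι, ℝ)),
        (∑ j, c j • ℓ j) x = ∑' i, (∑ j, c j • u j) i * x i := fun c x => by
      rw [tsum_sum_smul_mul hu c (memℓp_one_iff_summable_abs.1 x.2)]
      simp only [ℓ, LinearMap.coe_sum, LinearMap.coe_smul, ContinuousLinearMap.coe_coe,
        Finset.sum_apply, Pi.smul_apply, smul_eq_mul]
      rfl
    obtain ⟨c, hle, heq⟩ := exists_combination_norming_of_minimal ℓ
      (x₀ := ⟨x₀, memℓp_one_iff_summable_abs.2 hx₀⟩) fun x hx => by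
        simp only [lp.norm_eq_tsum_abs]
        exact hmin x (memℓp_one_iff_summable_abs.1 x.2) fun j => (hx j).trans (hint j)
    refine ⟨c, (isL1Subgradient_iff_tsum hx₀).2 ⟨abs_le_one_of_forall_tsum_mul_le fun x => ?_, ?_⟩⟩
    · rw [← hℓ]
      exact hle x
    · rw [← hℓ c ⟨x₀, memℓp_one_iff_summable_abs.2 hx₀⟩, heq, lp.norm_eq_tsum_abs]
  · rintro ⟨c, hc⟩ x hx hxy
    calc ∑' i, |x₀ i| = ∑' i, (∑ j, c j • u j) i * x₀ i :=
          (((isL1Subgradient_iff_tsum hx₀).1 hc).2).symm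
      _ = ∑' i, (∑ j, c j • u j) i * x i := by
          simp only [tsum_sum_smul_mul hu c hx₀, tsum_sum_smul_mul hu c hx, hint, hxy]
      _ ≤ ∑' i, |x i| := tsum_mul_le_tsum_abs hc.1 hx

/-- The set `V(U)` of the statement. -/
def signedPeaks [DecidableEq ι] (U : ι → ℝ) : Set (ι → ℝ) :=
  {z | ∃ i, |U i| = ⨆ k, |U k| ∧ z = Real.sign (U i) • (Pi.single i (1 : ℝ) : ι → ℝ)}

theorem convex_setOf_mul_abs_le_mul (U : ι → ℝ) {s : ℝ} (hs : 0 ≤ s) :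
    Convex ℝ {w : ι → ℝ | ∀ i, s * |w i| ≤ U i * w i} := by
  intro w hw w' hw' a b ha hb _ i
  simp only [Pi.add_apply, Pi.smul_apply, smul_eq_mul]
  calc s * |a * w i + b * w' i| ≤ s * (a * |w i| + b * |w' i|) := by
        gcongr
        refine (abs_add_le _ _).trans_eq ?_
        rw [abs_mul, abs_mul, abs_of_nonneg ha, abs_of_nonneg hb]
    _ = a * (s * |w i|) + b * (s * |w' i|) := by ring
    _ ≤ a * (U i * w i) + b * (U i * w' i) :=
        add_le_add (mul_le_mul_of_nonneg_left (hw i) ha) (mul_le_mul_of_nonneg_left (hw' i) hb)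
    _ = U i * (a * w i + b * w' i) := by ring

theorem mul_eq_iSup_mul_abs_of_mem_convexHull [DecidableEq ι] {U w : ι → ℝ}
    (hU : BddAbove (Set.range fun i => |U i|)) (hw : w ∈ convexHull ℝ (signedPeaks U)) (i : ι) :
    U i * w i = (⨆ k, |U k|) * |w i| := by
  set s := ⨆ k, |U k|
  have hs : 0 ≤ s := Real.iSup_nonneg fun _ => abs_nonneg _
  refine le_antisymm ?_ (convexHull_min ?_ (convex_setOf_mul_abs_le_mul U hs) hw i)
  · calc U i * w i ≤ |U i| * |w i| := by rw [← abs_mul]; exact le_abs_self _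
      _ ≤ s * |w i| := by gcongr; exact le_ciSup hU i
  · rintro _ ⟨k, hk, rfl⟩ i
    by_cases hik : i = k
    · subst hik
      calc s * |(Real.sign (U i) • (Pi.single i 1 : ι → ℝ)) i| ≤ s * 1 := by
            simpa using mul_le_mul_of_nonneg_left (Real.abs_sign_le_one_s12 (U i)) hs
        _ = U i * (Real.sign (U i) • (Pi.single i 1 : ι → ℝ)) i := by
            simp [Real.mul_sign_self, hk, s]
    · simp [hik]

theorem isL1Subgradient_of_mem_convexHull [DecidableEq ι] {U w : ι → ℝ}
    (hU : BddAbove (Set.range fun i => |U i|)) (hw : w ∈ convexHull ℝ (signedPeaks U)) :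
    IsL1Subgradient ((⨆ k, |U k|)⁻¹ • U) ((⨆ k, |U k|) • w) := by
  set s := ⨆ k, |U k|
  have hs : 0 ≤ s := Real.iSup_nonneg fun _ => abs_nonneg _
  refine ⟨fun i => ?_, fun i => ?_⟩
  · simpa [abs_mul, abs_of_nonneg hs] using inv_mul_le_one_of_le₀ (le_ciSup hU i) hs
  · have key : U i * w i = s * |w i| := mul_eq_iSup_mul_abs_of_mem_convexHull hU hw i
    simp only [Pi.smul_apply, smul_eq_mul]
    -- `s * s * s⁻¹ = s` holds also for `s = 0`, where `0⁻¹ = 0`.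
    calc s⁻¹ * U i * (s * w i) = s * s * s⁻¹ * |w i| := by
          rw [show s⁻¹ * U i * (s * w i) = s⁻¹ * s * (U i * w i) by ring, key]
          ring
      _ = |s * w i| := by rw [mul_self_mul_inv, abs_mul, abs_of_nonneg hs]

namespace IsL1Subgradient

variable {U x : ι → ℝ}

theorem abs_eq_one (h : IsL1Subgradient U x) {i : ι} (hi : x i ≠ 0) : |U i| = 1 := by
  have : |U i| * |x i| = |x i| := by rw [← abs_mul, h.2 i, abs_abs]
  exact (mul_eq_right₀ (abs_ne_zero.2 hi)).1 this

theorem finite_support (h : IsL1Subgradient U x) (hU : Tendsto U cofinite (𝓝 0)) :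
    (Function.support x).Finite := by
  have hlt : ∀ᶠ i in cofinite, |U i| < 1 :=
    hU.abs.eventually_lt_const (by simp)
  refine (eventually_cofinite.1 hlt).subset fun i hi => ?_
  simp [h.abs_eq_one hi]

theorem abs_mul_sign_smul (h : IsL1Subgradient U x) {v : ℝ} (hv : 0 < v) (i : ι) :
    |x i| * Real.sign ((v • U) i) = x i := by
  by_cases hi : x i = 0
  · simp [hi]
  have hUx := h.2 i
  rcases (abs_eq zero_le_one).1 (h.abs_eq_one hi) with hUi | hUi <;>
    simp only [hUi, Pi.smul_apply, smul_eq_mul] at hUx ⊢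
  · rw [mul_one, Real.sign_of_pos hv]; linarith
  · rw [Real.sign_of_neg (by linarith)]; linarith

theorem iSup_abs_smul [Nonempty ι] (h : IsL1Subgradient U x) {v : ℝ} (hv : 0 ≤ v) {i₀ : ι}
    (hi₀ : x i₀ ≠ 0) : ⨆ k, |(v • U) k| = v := by
  have hle : ∀ k, |(v • U) k| ≤ v := fun k => by
    simpa [abs_mul, abs_of_nonneg hv] using mul_le_of_le_one_right hv (h.1 k)
  refine le_antisymm (ciSup_le hle) ?_
  calc v = |(v • U) i₀| := by simp [abs_mul, abs_of_nonneg hv, h.abs_eq_one hi₀]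
    _ ≤ ⨆ k, |(v • U) k| := le_ciSup ⟨v, Set.forall_mem_range.2 hle⟩ i₀

theorem exists_mem_convexHull [Nonempty ι] [DecidableEq ι] (h : IsL1Subgradient U x)
    (hU : Tendsto U cofinite (𝓝 0)) (hx : Summable fun i => |x i|) :
    ∃ w ∈ convexHull ℝ (signedPeaks ((∑' i, |x i|) • U)),
      x = (⨆ k, |((∑' i, |x i|) • U) k|) • w := by
  by_cases hx0 : x = 0
  · subst hx0
    exact ⟨0, subset_convexHull ℝ _ ⟨Classical.arbitrary ι, by simp, by simp⟩, by simp⟩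
  set v := ∑' i, |x i|
  obtain ⟨i₀, hi₀⟩ : ∃ i, x i ≠ 0 := Function.ne_iff.1 hx0
  have hv : 0 < v := hx.tsum_pos (fun _ => abs_nonneg _) i₀ (abs_pos.2 hi₀)
  set S := (h.finite_support hU).toFinset
  have hsum : ∑ i ∈ S, |x i| = v :=
    (tsum_eq_sum (s := S) fun i hi => by simpa [S] using hi).symm
  refine ⟨v⁻¹ • x, ?_, by rw [h.iSup_abs_smul hv.le hi₀, smul_inv_smul₀ hv.ne']⟩
  have hw : v⁻¹ • x =
      ∑ i ∈ S, (|x i| / v) • (Real.sign ((v • U) i) • (Pi.single i 1 : ι → ℝ)) := by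
    ext k
    by_cases hk : x k = 0
    · simp [Finset.sum_apply, Pi.single_apply, S, hk]
    · rw [Pi.smul_apply, ← h.abs_mul_sign_smul hv k]
      simp only [S, Pi.smul_apply, smul_eq_mul, Finset.sum_apply, Pi.single_apply, mul_ite,
        mul_one, mul_zero, Finset.sum_ite_eq, Set.Finite.mem_toFinset, Function.mem_support, ne_eq,
        hk, not_false_eq_true, ↓reduceIte]
      ring
  rw [hw]
  refine (convex_convexHull ℝ _).sum_mem (fun i _ => by positivity)
    (by rw [← Finset.sum_div, hsum, div_self hv.ne']) fun i hi =>
      subset_convexHull ℝ _ ⟨i, ?_, rfl⟩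
  rw [h.iSup_abs_smul hv.le hi₀]
  simp [abs_mul, abs_of_pos hv, h.abs_eq_one (by simpa [S] using hi)]

end IsL1Subgradient

theorem minimum_norm_interpolation_l1_general
    {m : ℕ} (u : Fin m → ℕ → ℝ)
    (hu0 : ∀ j, Tendsto (u j) atTop (𝓝 0))
    (y : Fin m → ℝ) (xhat : ℕ → ℝ) (hxhat : Summable fun i => |xhat i|) :
    ((∀ j, ∑' i, u j i * xhat i = y j) ∧
        ∀ x : ℕ → ℝ, Summable (fun i => |x i|) →
          (∀ j, ∑' i, u j i * x i = y j) → ∑' i, |xhat i| ≤ ∑' i, |x i|) ↔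
      ((∀ j, ∑' i, u j i * xhat i = y j) ∧
        ∃ c : Fin m → ℝ, ∃ w ∈ convexHull ℝ
          {z : ℕ → ℝ | ∃ i : ℕ, |(∑ j, c j • u j) i| = (⨆ k, |(∑ j, c j • u j) k|) ∧
            z = Real.sign ((∑ j, c j • u j) i) • (Pi.single i (1 : ℝ) : ℕ → ℝ)},
          xhat = (⨆ k, |(∑ j, c j • u j) k|) • w) := by
  rw [← Nat.cofinite_eq_atTop] at hu0
  have hU : ∀ c : Fin m → ℝ, Tendsto (∑ j, c j • u j) cofinite (𝓝 0) := fun c => by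
    rw [Finset.sum_fn]
    simpa using tendsto_finsetSum Finset.univ fun j _ => (hu0 j).const_smul (c j)
  have hsmul : ∀ (a : ℝ) (c : Fin m → ℝ), ∑ j, (a • c) j • u j = a • ∑ j, c j • u j :=
    fun a c => by simp [Finset.smul_sum, smul_smul]
  refine and_congr_right fun hint => ?_
  rw [isMinimal_iff_exists_isL1Subgradient
    (fun j => memℓp_infty_iff.2 (hu0 j).norm.bddAbove_range_of_cofinite) hxhat hint]
  constructor
  · rintro ⟨c, hc⟩
    refine ⟨(∑' i, |xhat i|) • c, ?_⟩
    rw [hsmul]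
    exact hc.exists_mem_convexHull (hU c) hxhat
  · rintro ⟨c, w, hw, rfl⟩
    refine ⟨(⨆ k, |(∑ j, c j • u j) k|)⁻¹ • c, ?_⟩
    rw [hsmul]
    exact isL1Subgradient_of_mem_convexHull (hU c).abs.bddAbove_range_of_cofinite hw

/-- Representer theorem for minimum norm interpolation in `ℓ₁(ℕ)`
with linearly independent functionals `u₁, …, u_m ∈ c₀`: `x̂` is a solution iff it
interpolates and `x̂ = ‖u‖_∞ • w` for some `w` in the convex hull of
`{sign(u_i) e_i : |u_i| = ‖u‖_∞}`, where `u = Σ c_j u_j`. -/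
theorem minimum_norm_interpolation_l1
    {m : ℕ} (u : Fin m → ℕ → ℝ)
    (hu0 : ∀ j, Tendsto (u j) atTop (𝓝 0)) (hu : LinearIndependent ℝ u)
    (y : Fin m → ℝ) (xhat : ℕ → ℝ) (hxhat : Summable fun i => |xhat i|) :
    ((∀ j, ∑' i, u j i * xhat i = y j) ∧
        ∀ x : ℕ → ℝ, Summable (fun i => |x i|) →
          (∀ j, ∑' i, u j i * x i = y j) → ∑' i, |xhat i| ≤ ∑' i, |x i|) ↔
      ((∀ j, ∑' i, u j i * xhat i = y j) ∧
        ∃ c : Fin m → ℝ, ∃ w ∈ convexHull ℝ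
          {z : ℕ → ℝ | ∃ i : ℕ, |(∑ j, c j • u j) i| = (⨆ k, |(∑ j, c j • u j) k|) ∧
            z = Real.sign ((∑ j, c j • u j) i) • (Pi.single i (1 : ℝ) : ℕ → ℝ)},
          xhat = (⨆ k, |(∑ j, c j • u j) k|) • w) :=
  minimum_norm_interpolation_l1_general u hu0 y xhat hxhat
end

section
/- Let X be a real Banach space, B := X* its dual, let η₁, …, η_m ∈ X be linearly independent, and let y ∈ ℝ^m with y ≠ 0. Then f̂ ∈ B is a solution of the minimum norm interpolation problem inf{‖f‖_B : f(η_j) = y_j for all j} if and only if there exists a solution ĉ ∈ ℝ^m of the dual minimization problem inf{‖Σ_{j=1}^m c_j η_j‖_X : c ∈ ℝ^m, Σ_{j=1}^m c_j y_j = 1} such that f̂(η_j) = y_j for all j and ‖Σ_j ĉ_j η_j‖_X · f̂ ∈ ∂‖·‖_X(Σ_j ĉ_j η_j). -/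
/-!
Write `T c = ∑ cⱼ ηⱼ`, `L c = ∑ cⱼ yⱼ` and `u = T ĉ` for a dual minimizer `ĉ`. Every interpolant
`f` has `f u = L ĉ = 1`, hence `1 ≤ ‖f‖ ‖u‖`. Conversely, minimality of `ĉ` gives
`‖u‖ |L c| ≤ ‖T c‖` for all `c`, so `T c ↦ L c` is a well-defined functional of norm at most
`1 / ‖u‖` on the range of `T`, and Hahn–Banach extends it to an interpolant of the same norm.
So the minimal interpolation norm is `1 / ‖u‖`, and for an interpolant `f̂` the condition
`‖f̂‖ ‖u‖ ≤ 1` says precisely that `‖u‖ • f̂` is a subgradient of the norm at `u`.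
A dual minimizer exists since `T` is injective on the finite-dimensional space `ℝᵐ`, which makes
`c ↦ ‖T c‖` coercive.
-/

open Filter Function
open LinearMap (ker range mem_ker mem_range_self)

section Subgradient

variable {X : Type*} [NormedAddCommGroup X] [NormedSpace ℝ X]

theorem one_le_norm_mul_norm_of_apply_eq_one {f : StrongDual ℝ X} {u : X} (hfu : f u = 1) :
    1 ≤ ‖f‖ * ‖u‖ :=
  calc (1 : ℝ) = f u := hfu.symm
    _ ≤ ‖f u‖ := Real.le_norm_self _
    _ ≤ ‖f‖ * ‖u‖ := f.le_opNorm u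

theorem norm_le_one_iff_forall_apply_le_norm {g : StrongDual ℝ X} :
    ‖g‖ ≤ 1 ↔ ∀ v, g v ≤ ‖v‖ := by
  refine ⟨fun hg v => ?_, fun hg => g.opNorm_le_bound zero_le_one fun v => ?_⟩
  · calc g v ≤ ‖g v‖ := Real.le_norm_self _
      _ ≤ ‖g‖ * ‖v‖ := g.le_opNorm v
      _ ≤ 1 * ‖v‖ := by gcongr
      _ = ‖v‖ := one_mul _
  · have hneg := hg (-v)
    rw [map_neg, norm_neg] at hneg
    rw [one_mul, Real.norm_eq_abs, abs_le]
    exact ⟨by linarith, hg v⟩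

/-- The subdifferential of the norm at `u`. -/
theorem forall_apply_sub_le_norm_sub_norm_iff_s13 {g : StrongDual ℝ X} {u : X} :
    (∀ v, g (v - u) ≤ ‖v‖ - ‖u‖) ↔ ‖g‖ ≤ 1 ∧ g u = ‖u‖ := by
  rw [norm_le_one_iff_forall_apply_le_norm]
  refine ⟨fun h => ?_, fun ⟨hg, hgu⟩ v => by rw [map_sub, hgu]; linarith [hg v]⟩
  have hle : g u ≤ ‖u‖ := by
    have h2u := h (u + u)
    rw [add_sub_cancel_right] at h2u
    linarith [norm_add_le u u]
  have hge : ‖u‖ ≤ g u := by simpa using h 0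
  have hgu : g u = ‖u‖ := le_antisymm hle hge
  exact ⟨fun v => by linarith [h v, map_sub g v u], hgu⟩

theorem forall_norm_smul_apply_sub_le_iff {f : StrongDual ℝ X} {u : X} (hfu : f u = 1) :
    (∀ v, (‖u‖ • f) (v - u) ≤ ‖v‖ - ‖u‖) ↔ ‖f‖ * ‖u‖ ≤ 1 := by
  rw [forall_apply_sub_le_norm_sub_norm_iff_s13, norm_smul, norm_norm, mul_comm,
    smul_apply, hfu, smul_eq_mul, mul_one, and_iff_left rfl]

end Subgradient

section Extension

variable {E X : Type*} [AddCommGroup E] [Module ℝ E] [NormedAddCommGroup X] [NormedSpace ℝ X]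
  (T : E →ₗ[ℝ] X) (L : E →ₗ[ℝ] ℝ)

theorem exists_strongDual_comp_eq_of_abs_le {M : ℝ} (hM : 0 ≤ M)
    (hL : ∀ c, |L c| ≤ M * ‖T c‖) :
    ∃ f : StrongDual ℝ X, (∀ c, f (T c) = L c) ∧ ‖f‖ ≤ M := by
  have hker : ker T ≤ ker L := fun c hc => by
    have := hL c
    rw [mem_ker.1 hc, norm_zero, mul_zero] at this
    exact mem_ker.2 (abs_nonpos_iff.1 this)
  let ℓ : range T →ₗ[ℝ] ℝ :=
    (ker T).liftQ L hker ∘ₗ T.quotKerEquivRange.symm.toLinearMap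
  have hℓ : ∀ c, ℓ ⟨T c, mem_range_self T c⟩ = L c := fun c => by simp [ℓ]
  obtain ⟨f, hf, hfnorm⟩ := exists_extension_norm_eq (range T) <|
    ℓ.mkContinuous M fun ⟨_, c, hc⟩ => by subst hc; simpa [hℓ] using hL c
  exact ⟨f, fun c => (hf ⟨T c, mem_range_self T c⟩).trans (hℓ c),
    hfnorm ▸ LinearMap.mkContinuous_norm_le _ hM _⟩

theorem norm_mul_abs_le_of_isMinOn {c₀ : E}
    (hmin : IsMinOn (fun c => ‖T c‖) {c | L c = 1} c₀) (c : E) :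
    ‖T c₀‖ * |L c| ≤ ‖T c‖ := by
  rcases eq_or_ne (L c) 0 with hc | hc
  · simp [hc]
  have hmem : (L c)⁻¹ • c ∈ {c | L c = 1} := by simp [hc]
  have hle : ‖T c₀‖ ≤ ‖T ((L c)⁻¹ • c)‖ := hmin hmem
  rw [map_smul, norm_smul, norm_inv, Real.norm_eq_abs, le_inv_mul_iff₀ (abs_pos.2 hc),
    mul_comm] at hle
  exact hle

end Extension

theorem exists_isMinOn_norm_of_injective {E X : Type*} [NormedAddCommGroup E]
    [NormedSpace ℝ E] [FiniteDimensional ℝ E] [NormedAddCommGroup X] [NormedSpace ℝ X]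
    {T : E →ₗ[ℝ] X} (hT : Injective T) {S : Set E} (hS : IsClosed S) (hne : S.Nonempty) :
    ∃ c ∈ S, IsMinOn (fun c => ‖T c‖) S c := by
  obtain ⟨c₀, hc₀⟩ := hne
  obtain ⟨K, -, hK⟩ := T.exists_antilipschitzWith (LinearMap.ker_eq_bot.2 hT)
  have hcoercive : Tendsto (fun c => ‖T c‖) (cocompact E) atTop := by
    rw [← Metric.cobounded_eq_cocompact]
    exact tendsto_norm_cobounded_atTop.comp hK.tendsto_cobounded
  exact (continuous_norm.comp T.continuous_of_finiteDimensional).continuousOn.exists_isMinOn'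
    hS hc₀ ((hcoercive.eventually (eventually_ge_atTop _)).filter_mono inf_le_left)

theorem forall_apply_eq_iff_forall_apply_linearCombination {ι R M N F : Type*} [Fintype ι]
    [CommSemiring R] [AddCommMonoid M] [Module R M] [AddCommMonoid N] [Module R N]
    [FunLike F M N] [LinearMapClass F R M N] {f : F} {η : ι → M} {y : ι → N} :
    (∀ j, f (η j) = y j) ↔
      ∀ c, f (Fintype.linearCombination R η c) = Fintype.linearCombination R y c := by
  classical
  refine ⟨fun h c => by simp [Fintype.linearCombination_apply, h], fun h j => ?_⟩
  simpa using h (Pi.single j 1)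

section MinNormExtension

variable {E X : Type*} [AddCommGroup E] [Module ℝ E] [NormedAddCommGroup X] [NormedSpace ℝ X]

def IsMinNormExtension (T : E →ₗ[ℝ] X) (L : E →ₗ[ℝ] ℝ) (f : StrongDual ℝ X) : Prop :=
  (∀ c, f (T c) = L c) ∧ ∀ g : StrongDual ℝ X, (∀ c, g (T c) = L c) → ‖f‖ ≤ ‖g‖

variable {T : E →ₗ[ℝ] X} {L : E →ₗ[ℝ] ℝ} {c₀ : E} {fhat : StrongDual ℝ X}

theorem isMinNormExtension_iff_norm_mul_norm_le_one (hc₀ : L c₀ = 1)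
    (hmin : IsMinOn (fun c => ‖T c‖) {c | L c = 1} c₀) (hfhat : ∀ c, fhat (T c) = L c) :
    IsMinNormExtension T L fhat ↔ ‖fhat‖ * ‖T c₀‖ ≤ 1 := by
  have hfu : fhat (T c₀) = 1 := (hfhat c₀).trans hc₀
  have hpos : 0 < ‖T c₀‖ := norm_pos_iff.2 fun h => by simp [h] at hfu
  refine ⟨fun ⟨_, hfmin⟩ => ?_, fun hle => ⟨hfhat, fun f hf => ?_⟩⟩
  · obtain ⟨f, hf, hfnorm⟩ :=
      exists_strongDual_comp_eq_of_abs_le T L (inv_nonneg.2 hpos.le) fun c => by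
        rw [inv_mul_eq_div, le_div_iff₀' hpos]
        exact norm_mul_abs_le_of_isMinOn T L hmin c
    calc ‖fhat‖ * ‖T c₀‖ ≤ ‖T c₀‖⁻¹ * ‖T c₀‖ := by gcongr; exact (hfmin f hf).trans hfnorm
      _ = 1 := inv_mul_cancel₀ hpos.ne'
  · exact le_of_mul_le_mul_right
      (hle.trans (one_le_norm_mul_norm_of_apply_eq_one ((hf c₀).trans hc₀))) hpos

theorem isMinNormExtension_iff_forall_smul_apply_sub_le (hc₀ : L c₀ = 1)
    (hmin : IsMinOn (fun c => ‖T c‖) {c | L c = 1} c₀) :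
    IsMinNormExtension T L fhat ↔ (∀ c, fhat (T c) = L c) ∧
      ∀ v, (‖T c₀‖ • fhat) (v - T c₀) ≤ ‖v‖ - ‖T c₀‖ := by
  refine ⟨fun h => ⟨h.1, ?_⟩, fun ⟨hfhat, hsub⟩ => ?_⟩
  · rwa [forall_norm_smul_apply_sub_le_iff ((h.1 c₀).trans hc₀),
      ← isMinNormExtension_iff_norm_mul_norm_le_one hc₀ hmin h.1]
  · rwa [isMinNormExtension_iff_norm_mul_norm_le_one hc₀ hmin hfhat,
      ← forall_norm_smul_apply_sub_le_iff ((hfhat c₀).trans hc₀)]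

end MinNormExtension

theorem minimum_norm_interpolation_iff_dual_problem_general
    {X : Type*} [NormedAddCommGroup X] [NormedSpace ℝ X]
    {m : ℕ} (η : Fin m → X) (hη : LinearIndependent ℝ η)
    (y : Fin m → ℝ) (hy : y ≠ 0) (fhat : X →L[ℝ] ℝ) :
    ((∀ j, fhat (η j) = y j) ∧
        ∀ f : X →L[ℝ] ℝ, (∀ j, f (η j) = y j) → ‖fhat‖ ≤ ‖f‖) ↔
      (∃ chat : Fin m → ℝ,
        ((∑ j, chat j * y j = 1) ∧
          ∀ c : Fin m → ℝ, (∑ j, c j * y j = 1) →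
            ‖∑ j, chat j • η j‖ ≤ ‖∑ j, c j • η j‖) ∧
        (∀ j, fhat (η j) = y j) ∧
        (∀ v : X, (‖∑ j, chat j • η j‖ • fhat) (v - ∑ j, chat j • η j) ≤
          ‖v‖ - ‖∑ j, chat j • η j‖)) := by
  let T := Fintype.linearCombination ℝ η
  let L := Fintype.linearCombination ℝ y
  simp only [forall_apply_eq_iff_forall_apply_linearCombination (R := ℝ)]
  obtain ⟨j, hj⟩ : ∃ j, y j ≠ 0 := Function.ne_iff.1 hy
  have hfeasible : Pi.single j (y j)⁻¹ ∈ {c | L c = 1} := by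
    simp [L, Fintype.linearCombination_apply_single, hj]
  constructor
  · intro hfhat
    obtain ⟨chat, hchat, hmin⟩ := exists_isMinOn_norm_of_injective
      hη.fintypeLinearCombination_injective
      (isClosed_eq L.continuous_of_finiteDimensional continuous_const) ⟨_, hfeasible⟩
    exact ⟨chat, ⟨hchat, hmin⟩,
      (isMinNormExtension_iff_forall_smul_apply_sub_le (T := T) (L := L) hchat hmin).1 hfhat⟩
  · rintro ⟨chat, ⟨hchat, hmin⟩, hsub⟩
    exact (isMinNormExtension_iff_forall_smul_apply_sub_le (T := T) (L := L) hchat hmin).2 hsub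

/-- `f̂ ∈ B = X*` is a solution of the minimum norm interpolation
problem with data `y ≠ 0` iff there is a solution `ĉ` of the dual minimization problem
`inf{‖Σ c_j η_j‖_X : Σ c_j y_j = 1}` such that `f̂` interpolates and
`‖Σ ĉ_j η_j‖ • f̂ ∈ ∂‖·‖_X(Σ ĉ_j η_j)`. -/
theorem minimum_norm_interpolation_iff_dual_problem
    {X : Type*} [NormedAddCommGroup X] [NormedSpace ℝ X] [CompleteSpace X]
    {m : ℕ} (η : Fin m → X) (hη : LinearIndependent ℝ η)
    (y : Fin m → ℝ) (hy : y ≠ 0) (fhat : X →L[ℝ] ℝ) :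
    ((∀ j, fhat (η j) = y j) ∧
        ∀ f : X →L[ℝ] ℝ, (∀ j, f (η j) = y j) → ‖fhat‖ ≤ ‖f‖) ↔
      (∃ chat : Fin m → ℝ,
        ((∑ j, chat j * y j = 1) ∧
          ∀ c : Fin m → ℝ, (∑ j, c j * y j = 1) →
            ‖∑ j, chat j • η j‖ ≤ ‖∑ j, c j • η j‖) ∧
        (∀ j, fhat (η j) = y j) ∧
        (∀ v : X, (‖∑ j, chat j • η j‖ • fhat) (v - ∑ j, chat j • η j) ≤
          ‖v‖ - ‖∑ j, chat j • η j‖)) :=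
  minimum_norm_interpolation_iff_dual_problem_general η hη y hy fhat
end

section
/- Let X be a real Banach space, B := X* its dual, let η₁, …, η_m ∈ X be linearly independent, and define L : B → ℝ^m by L(f) := (f(η_j))_{j=1}^m. Let y ∈ ℝ^m, let Q_y : ℝ^m → [0, ∞) be lower semicontinuous, let φ : [0, ∞) → [0, ∞) be lower semicontinuous, increasing, and coercive (φ(t) → ∞ as t → ∞), and let λ > 0. Then the regularization problem inf{Q_y(L(f)) + λ φ(‖f‖_B) : f ∈ B} has at least one solution, i.e. the infimum is attained at some f̂ ∈ B. -/
open Filter Topology Set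

/-! Work in the weak-* topology on `B = X*`. The objective `f ↦ Q (L f) + λ φ ‖f‖` is lower
semicontinuous there: `L` is weak-* continuous, the dual norm is a supremum of weak-* continuous
functions, and an increasing lower semicontinuous `φ` preserves lower semicontinuity. Since
`Q ≥ 0` and `φ` is coercive, the objective tends to `∞` outside norm balls, which are weak-*
compact by Banach–Alaoglu; a lower semicontinuous function with this property attains its
minimum. -/

theorem LowerSemicontinuous.exists_forall_le_of_tendsto_cocompact {α β : Type*}
    [TopologicalSpace α] [Nonempty α] [LinearOrder β] {F : α → β}
    (hF : LowerSemicontinuous F) (hlim : Tendsto F (cocompact α) atTop) :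
    ∃ x, ∀ y, F x ≤ F y := by
  let x₀ : α := Classical.arbitrary α
  obtain ⟨K, hK, hKc⟩ := mem_cocompact.1 (hlim.eventually_ge_atTop (F x₀))
  obtain ⟨x, -, hx⟩ := (hF.lowerSemicontinuousOn _).exists_isMinOn
    (insert_nonempty x₀ K) (hK.insert x₀)
  refine ⟨x, fun y => ?_⟩
  by_cases hy : y ∈ insert x₀ K
  · exact hx hy
  · exact (hx (mem_insert x₀ K)).trans (hKc fun hyK => hy (mem_insert_of_mem x₀ hyK))

theorem LowerSemicontinuousOn.comp_lowerSemicontinuous_of_monotoneOn {α β : Type*}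
    [TopologicalSpace α] [Preorder β] {φ : ℝ → β} {a : ℝ}
    (hφ : LowerSemicontinuousOn φ (Ici a)) (hmono : MonotoneOn φ (Ici a))
    {g : α → ℝ} (hg : LowerSemicontinuous g) (hga : ∀ x, a ≤ g x) :
    LowerSemicontinuous (φ ∘ g) := by
  intro x c hc
  rcases (hga x).eq_or_lt with hx | hx
  · exact Eventually.of_forall fun x' =>
      hc.trans_le (hmono (hga x) (hga x') (hx ▸ hga x'))
  · have hnear : ∀ᶠ t in 𝓝 (g x), c < φ t := by
      simpa only [nhdsWithin_eq_nhds.2 (Ici_mem_nhds hx)] using hφ (g x) (hga x) c hc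
    obtain ⟨t, htx, hct, hat⟩ := (hnear.and (Ioi_mem_nhds hx)).exists_lt
    filter_upwards [hg x t htx] with x' hx'
    exact hct.trans_le (hmono (mem_Ici.2 hat.le) (hga x') hx'.le)

namespace WeakDual

theorem lowerSemicontinuous_norm_toStrongDual {𝕜 E : Type*} [DenselyNormedField 𝕜]
    [NormedAddCommGroup E] [NormedSpace 𝕜 E] :
    LowerSemicontinuous (fun f : WeakDual 𝕜 E => (‖toStrongDual f‖ : ℝ)) := by
  intro f c hc
  obtain ⟨x, hx1, hx2⟩ := (toStrongDual f).exists_lt_apply_of_lt_opNorm hc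
  filter_upwards [(isOpen_lt continuous_const (eval_continuous x).norm).mem_nhds hx2] with g hg
  calc c < ‖toStrongDual g x‖ := hg
    _ ≤ ‖toStrongDual g‖ * ‖x‖ := (toStrongDual g).le_opNorm x
    _ ≤ ‖toStrongDual g‖ := mul_le_of_le_one_right (norm_nonneg _) hx1.le

theorem cocompact_le_comap_norm_atTop {𝕜 E : Type*} [NontriviallyNormedField 𝕜] [ProperSpace 𝕜]
    [SeminormedAddCommGroup E] [NormedSpace 𝕜 E] :
    cocompact (WeakDual 𝕜 E) ≤ comap (fun f => ‖toStrongDual f‖) atTop := by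
  refine (atTop_basis.comap _).ge_iff.2 fun R _ =>
    mem_cocompact.2 ⟨_, isCompact_closedBall 0 R, fun f hf => ?_⟩
  simp only [mem_compl_iff, mem_preimage, mem_closedBall_zero_iff, not_le] at hf
  exact hf.le

end WeakDual

theorem regularization_exists_general
    {X : Type*} [NormedAddCommGroup X] [NormedSpace ℝ X]
    {m : ℕ} (η : Fin m → X)
    (Q : (Fin m → ℝ) → ℝ) (hQ0 : ∀ z, 0 ≤ Q z)
    (hQlsc : LowerSemicontinuous Q)
    (φ : ℝ → ℝ)
    (hφlsc : LowerSemicontinuousOn φ (Set.Ici 0))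
    (hφmono : ∀ s t : ℝ, 0 ≤ s → s ≤ t → φ s ≤ φ t)
    (hφcoer : Tendsto φ atTop atTop)
    (lam : ℝ) (hlam : 0 < lam) :
    ∃ fhat : X →L[ℝ] ℝ, ∀ f : X →L[ℝ] ℝ,
      Q (fun j => fhat (η j)) + lam * φ ‖fhat‖ ≤
        Q (fun j => f (η j)) + lam * φ ‖f‖ := by
  let F : WeakDual ℝ X → ℝ := fun f => Q (fun j => f (η j)) + lam * φ ‖WeakDual.toStrongDual f‖
  have hloss : LowerSemicontinuous fun f : WeakDual ℝ X => Q fun j => f (η j) :=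
    hQlsc.comp (continuous_pi fun j => WeakDual.eval_continuous (η j))
  have hreg : LowerSemicontinuous fun f : WeakDual ℝ X => φ ‖WeakDual.toStrongDual f‖ :=
    hφlsc.comp_lowerSemicontinuous_of_monotoneOn (fun s hs t _ hst => hφmono s t hs hst)
      WeakDual.lowerSemicontinuous_norm_toStrongDual fun _ => norm_nonneg _
  have hF : LowerSemicontinuous F := hloss.add <|
    (continuous_const_mul lam).comp_lowerSemicontinuous hreg (monotone_mul_left_of_nonneg hlam.le)
  have hcoer : Tendsto F (cocompact _) atTop :=
    (((hφcoer.comp tendsto_comap).const_mul_atTop hlam).nonneg_add_atTop fun _ => hQ0 _).mono_left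
      WeakDual.cocompact_le_comap_norm_atTop
  obtain ⟨fhat, hfhat⟩ := hF.exists_forall_le_of_tendsto_cocompact hcoer
  exact ⟨WeakDual.toStrongDual fhat, fun f => hfhat (WeakDual.toStrongDual.symm f)⟩

/-- Existence of a solution of the regularization problem
`inf{Q_y(L(f)) + λ φ(‖f‖) : f ∈ B}` in the dual `B = X*` of a Banach space `X`, for a
lower semicontinuous nonnegative loss `Q_y` and a lower semicontinuous, increasing,
coercive nonnegative regularizer `φ`. -/
theorem regularization_exists
    {X : Type*} [NormedAddCommGroup X] [NormedSpace ℝ X] [CompleteSpace X]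
    {m : ℕ} (η : Fin m → X) (hη : LinearIndependent ℝ η)
    (y : Fin m → ℝ) (Q : (Fin m → ℝ) → ℝ) (hQ0 : ∀ z, 0 ≤ Q z)
    (hQlsc : LowerSemicontinuous Q)
    (φ : ℝ → ℝ) (hφ0 : ∀ t : ℝ, 0 ≤ t → 0 ≤ φ t)
    (hφlsc : LowerSemicontinuousOn φ (Set.Ici 0))
    (hφmono : ∀ s t : ℝ, 0 ≤ s → s ≤ t → φ s ≤ φ t)
    (hφcoer : Tendsto φ atTop atTop)
    (lam : ℝ) (hlam : 0 < lam) :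
    ∃ fhat : X →L[ℝ] ℝ, ∀ f : X →L[ℝ] ℝ,
      Q (fun j => fhat (η j)) + lam * φ ‖fhat‖ ≤
        Q (fun j => f (η j)) + lam * φ ‖f‖ :=
  regularization_exists_general η Q hQ0 hQlsc φ hφlsc hφmono hφcoer lam hlam
end

section
/- Let B be a real Banach space with dual space B*, let ν₁, …, ν_m ∈ B* be linearly independent, and define L : B → ℝ^m by L(f) := (ν_j(f))_{j=1}^m. Let y₀ ∈ ℝ^m, let Q_{y₀} : ℝ^m → [0, ∞) be a loss function, let φ : [0, ∞) → [0, ∞) be an increasing regularizer, and let λ > 0. Let f̂ ∈ B be a solution of the regularization problem inf{Q_{y₀}(L(f)) + λ φ(‖f‖_B) : f ∈ B}. Then: (1) every solution ĝ of the minimum norm interpolation problem with data y := L(f̂) (i.e., ĝ minimizes ‖·‖_B over {g ∈ B : L(g) = L(f̂)}) is also a solution of the regularization problem with data y₀; (2) if moreover φ is strictly increasing, then f̂ itself is a solution of the minimum norm interpolation problem with data y := L(f̂). -/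
/-!
Two elements with the same interpolation data `L f` have the same loss `Q (L f)`, so on a fibre
of `L` the regularization objective differs only through `λ φ ‖f‖`, which is (strictly)
increasing in the norm whenever `φ` is.
-/

open Set

section

variable {E Y : Type*} [SeminormedAddGroup E] (L : E → Y) (Q : Y → ℝ) (φ : ℝ → ℝ) (lam : ℝ)

def regularizationObjective (f : E) : ℝ :=
  Q (L f) + lam * φ ‖f‖

variable {L Q φ lam}

theorem regularizationObjective_le_of_norm_le {f g : E} (hL : L g = L f)
    (hφ : MonotoneOn φ (Ici 0)) (hlam : 0 ≤ lam) (hnorm : ‖g‖ ≤ ‖f‖) :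
    regularizationObjective L Q φ lam g ≤ regularizationObjective L Q φ lam f := by
  have hφle : φ ‖g‖ ≤ φ ‖f‖ :=
    hφ (norm_nonneg g) ((norm_nonneg g).trans hnorm) hnorm
  unfold regularizationObjective
  rw [hL]
  gcongr

theorem regularizationObjective_lt_of_norm_lt {f g : E} (hL : L g = L f)
    (hφ : StrictMonoOn φ (Ici 0)) (hlam : 0 < lam) (hnorm : ‖g‖ < ‖f‖) :
    regularizationObjective L Q φ lam g < regularizationObjective L Q φ lam f := by
  have hφlt : φ ‖g‖ < φ ‖f‖ :=
    hφ (norm_nonneg g) ((norm_nonneg g).trans hnorm.le) hnorm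
  unfold regularizationObjective
  rw [hL]
  gcongr

theorem IsMinOn.regularizationObjective_of_isMinOn_norm {fhat ghat : E}
    (hfhat : IsMinOn (regularizationObjective L Q φ lam) univ fhat)
    (hghat_interp : L ghat = L fhat) (hghat : IsMinOn (‖·‖) (L ⁻¹' {L fhat}) ghat)
    (hφ : MonotoneOn φ (Ici 0)) (hlam : 0 ≤ lam) :
    IsMinOn (regularizationObjective L Q φ lam) univ ghat := by
  refine isMinOn_univ_iff.mpr fun f => ?_
  have hnorm : ‖ghat‖ ≤ ‖fhat‖ := isMinOn_iff.mp hghat fhat rfl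
  exact (regularizationObjective_le_of_norm_le hghat_interp hφ hlam hnorm).trans
    (isMinOn_univ_iff.mp hfhat f)

theorem IsMinOn.norm_of_regularizationObjective {fhat : E}
    (hfhat : IsMinOn (regularizationObjective L Q φ lam) univ fhat)
    (hφ : StrictMonoOn φ (Ici 0)) (hlam : 0 < lam) :
    IsMinOn (‖·‖) (L ⁻¹' {L fhat}) fhat := by
  refine isMinOn_iff.mpr fun g hg => ?_
  by_contra! hlt
  exact (regularizationObjective_lt_of_norm_lt hg hφ hlam hlt).not_ge
    (isMinOn_univ_iff.mp hfhat g)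

end

theorem regularization_and_minimum_norm_interpolation_general
    {B : Type*} [NormedAddCommGroup B] [NormedSpace ℝ B]
    {m : ℕ} (ν : Fin m → (B →L[ℝ] ℝ))
    (Q : (Fin m → ℝ) → ℝ)
    (φ : ℝ → ℝ)
    (hφmono : ∀ s t : ℝ, 0 ≤ s → s ≤ t → φ s ≤ φ t)
    (lam : ℝ) (hlam : 0 < lam) (fhat : B)
    (hsol : ∀ f : B,
      Q (fun j => ν j fhat) + lam * φ ‖fhat‖ ≤ Q (fun j => ν j f) + lam * φ ‖f‖) :
    (∀ ghat : B,
        ((∀ j, ν j ghat = ν j fhat) ∧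
          ∀ g : B, (∀ j, ν j g = ν j fhat) → ‖ghat‖ ≤ ‖g‖) →
        ∀ f : B,
          Q (fun j => ν j ghat) + lam * φ ‖ghat‖ ≤
            Q (fun j => ν j f) + lam * φ ‖f‖) ∧
    ((∀ s t : ℝ, 0 ≤ s → s < t → φ s < φ t) →
      ∀ g : B, (∀ j, ν j g = ν j fhat) → ‖fhat‖ ≤ ‖g‖) := by
  set L : B → Fin m → ℝ := fun f j => ν j f
  have hfhat : IsMinOn (regularizationObjective L Q φ lam) univ fhat :=
    isMinOn_univ_iff.mpr hsol
  constructor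
  · rintro ghat ⟨hinterp, hmin⟩ f
    have hghat : IsMinOn (‖·‖) (L ⁻¹' {L fhat}) ghat :=
      isMinOn_iff.mpr fun g hg => hmin g (congrFun hg)
    exact hfhat.regularizationObjective_of_isMinOn_norm (funext hinterp) hghat
      (fun s hs t _ hst => hφmono s t hs hst) hlam.le (mem_univ f)
  · intro hstrict g hg
    exact isMinOn_iff.mp (hfhat.norm_of_regularizationObjective
      (fun s hs t _ hst => hstrict s t hs hst) hlam) g (funext hg)

/-- Connection between the regularization problem and minimum norm
interpolation: if `f̂` solves the regularization problem with increasing regularizer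
`φ`, then (1) any solution `ĝ` of the minimum norm interpolation problem with data
`L(f̂)` also solves the regularization problem; (2) if `φ` is strictly increasing, then
`f̂` itself solves the minimum norm interpolation problem with data `L(f̂)`. -/
theorem regularization_and_minimum_norm_interpolation
    {B : Type*} [NormedAddCommGroup B] [NormedSpace ℝ B] [CompleteSpace B]
    {m : ℕ} (ν : Fin m → (B →L[ℝ] ℝ)) (hν : LinearIndependent ℝ ν)
    (y₀ : Fin m → ℝ) (Q : (Fin m → ℝ) → ℝ) (hQ0 : ∀ z, 0 ≤ Q z)
    (φ : ℝ → ℝ) (hφ0 : ∀ t : ℝ, 0 ≤ t → 0 ≤ φ t)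
    (hφmono : ∀ s t : ℝ, 0 ≤ s → s ≤ t → φ s ≤ φ t)
    (lam : ℝ) (hlam : 0 < lam) (fhat : B)
    (hsol : ∀ f : B,
      Q (fun j => ν j fhat) + lam * φ ‖fhat‖ ≤ Q (fun j => ν j f) + lam * φ ‖f‖) :
    (∀ ghat : B,
        ((∀ j, ν j ghat = ν j fhat) ∧
          ∀ g : B, (∀ j, ν j g = ν j fhat) → ‖ghat‖ ≤ ‖g‖) →
        ∀ f : B,
          Q (fun j => ν j ghat) + lam * φ ‖ghat‖ ≤
            Q (fun j => ν j f) + lam * φ ‖f‖) ∧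
    ((∀ s t : ℝ, 0 ≤ s → s < t → φ s < φ t) →
      ∀ g : B, (∀ j, ν j g = ν j fhat) → ‖fhat‖ ≤ ‖g‖) :=
  regularization_and_minimum_norm_interpolation_general ν Q φ hφmono lam hlam fhat hsol
end
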